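/- arXiv:1008.1443 — 3 statements merged into one kernel-verified Lean document; each statement's English description precedes it below -/
import Mathlib

section
/- Let f ∈ Inj(Ω) be a map that has at least one infinite cycle in its cycle decomposition, and let n ∈ ℤ₊ be such that (f)C_n > 0. Then there exists a transposition h ∈ Fin(Ω) such that (fh)C_n = (f)C_n − 1 and (fh)C_m = (f)C_m for all m ∈ ℤ₊ with m ≠ n. -/
open Cardinal Function Set

universe u
variable {Ω : Type u}

/-- Right-order composition: `rcomp f g` applies `f` first, then `g`
(this is the product `fg` when maps are written on the right of their arguments). -/
def rcomp (f g : Ω → Ω) : Ω → Ω := g ∘ f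

/-- Conjugation `a f a⁻¹` in right-operator notation: apply `a`, then `f`, then `a⁻¹`. -/
def conjBy (a : Equiv.Perm Ω) (f : Ω → Ω) : Ω → Ω := ⇑a.symm ∘ f ∘ ⇑a

/-- `s` is a cycle under `f`: it is nonempty, `f α ∈ s ↔ α ∈ s` for all `α`, and no proper
nonempty subset of `s` has this property. -/
def IsCycleUnder (f : Ω → Ω) (s : Set Ω) : Prop :=
  s.Nonempty ∧ (∀ α, f α ∈ s ↔ α ∈ s) ∧
    ∀ t ⊆ s, t.Nonempty → (∀ α, f α ∈ t ↔ α ∈ t) → t = s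

/-- A forward cycle: an infinite cycle meeting the complement of the range of `f`. -/
def IsForwardCycle (f : Ω → Ω) (s : Set Ω) : Prop :=
  IsCycleUnder f s ∧ s.Infinite ∧ (s \ Set.range f).Nonempty

/-- An open cycle: an infinite cycle that is not a forward cycle. -/
def IsOpenCycle (f : Ω → Ω) (s : Set Ω) : Prop :=
  IsCycleUnder f s ∧ s.Infinite ∧ ¬(s \ Set.range f).Nonempty

/-- `f` and `g` have equivalent cycle decompositions: there is a bijection between their
cycles preserving cardinality and forwardness. -/
def EquivCycleDecomp (f g : Ω → Ω) : Prop :=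
  ∃ e : {s : Set Ω // IsCycleUnder f s} ≃ {s : Set Ω // IsCycleUnder g s},
    ∀ s : {s : Set Ω // IsCycleUnder f s},
      Cardinal.mk ↥s.1 = Cardinal.mk ↥(e s).1 ∧
      (IsForwardCycle f s.1 ↔ IsForwardCycle g (e s).1)

/-- `|Ω \ (Ω)f|`, the cardinality of the complement of the image of `f`. -/
noncomputable def coim (f : Ω → Ω) : Cardinal := Cardinal.mk ↥(Set.range f)ᶜ

/-- `(f)C_n`: the number of cycles under `f` of cardinality `n`. -/
noncomputable def Cn (f : Ω → Ω) (n : ℕ) : Cardinal :=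
  Cardinal.mk {s : Set Ω // IsCycleUnder f s ∧ Cardinal.mk ↥s = n}

/-- `(f)C_open`: the number of open cycles under `f`. -/
noncomputable def Copen (f : Ω → Ω) : Cardinal :=
  Cardinal.mk {s : Set Ω // IsOpenCycle f s}

/-- `(f)C_fwd`: the number of forward cycles under `f`. -/
noncomputable def Cfwd (f : Ω → Ω) : Cardinal :=
  Cardinal.mk {s : Set Ω // IsForwardCycle f s}

/-- `f ≈_fin g`. -/
def FinEquiv (f g : Ω → Ω) : Prop :=
  Copen f = Copen g ∧ Cfwd f = Cfwd g ∧
  {n : ℕ | 0 < n ∧ Cn f n ≠ Cn g n}.Finite ∧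
  ∀ n : ℕ, 0 < n → Cn f n ≠ Cn g n → Cn f n < ℵ₀ ∧ Cn g n < ℵ₀

/-- `Σ_{n ∈ ℤ₊} ((f)C_n − (g)C_n)`, with a term taken to be `0` when `(f)C_n = (g)C_n`
(in particular when both are the same infinite cardinal). -/
noncomputable def diffSum (f g : Ω → Ω) : ℤ :=
  ∑ᶠ n : ℕ, if 0 < n then (((Cn f n).toNat : ℤ) - ((Cn g n).toNat : ℤ)) else 0

/-- `f ≈_even g`. -/
def EvenEquiv (f g : Ω → Ω) : Prop := FinEquiv f g ∧ Even (diffSum f g)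

/-- A permutation is finitary if it has finite support. -/
def Finitary (h : Equiv.Perm Ω) : Prop := {x | h x ≠ x}.Finite

/-- A transposition: interchanges two points and fixes all others. -/
def IsTransposition (h : Equiv.Perm Ω) : Prop :=
  ∃ x y, x ≠ y ∧ h x = y ∧ h y = x ∧ ∀ z, z ≠ x → z ≠ y → h z = z

/-- An even finitary permutation: a product of an even number of transpositions. -/
def IsAlt (h : Equiv.Perm Ω) : Prop :=
  ∃ l : List (Equiv.Perm Ω), (∀ τ ∈ l, IsTransposition τ) ∧ l.prod = h ∧ Even l.length

/-- `Sym(Ω)` as a set of maps `Ω → Ω`. -/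
def symSet (Ω : Type u) : Set (Ω → Ω) := {f | Function.Bijective f}

/-- `Fin(Ω)` as a set of maps `Ω → Ω`. -/
def finSet (Ω : Type u) : Set (Ω → Ω) := {f | ∃ h : Equiv.Perm Ω, Finitary h ∧ f = ⇑h}

/-- `Alt(Ω)` as a set of maps `Ω → Ω`. -/
def altSet (Ω : Type u) : Set (Ω → Ω) := {f | ∃ h : Equiv.Perm Ω, IsAlt h ∧ f = ⇑h}

/-- `Inj_fin(Ω) = {f : 1 ≤ |Ω \ (Ω)f| < ℵ₀}`. -/
def injFinSet (Ω : Type u) : Set (Ω → Ω) :=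
  {f | Function.Injective f ∧ 1 ≤ coim f ∧ coim f < ℵ₀}

/-- `Inj_∞(Ω) = {f : |Ω \ (Ω)f| = ℵ₀}`. -/
def injInfSet (Ω : Type u) : Set (Ω → Ω) := {f | Function.Injective f ∧ coim f = ℵ₀}

/-- `M` is a submonoid of `Inj(Ω)`: all its members are injective, it contains the
identity, and it is closed under composition. -/
def IsSubmonoidOfInj (M : Set (Ω → Ω)) : Prop :=
  (∀ f ∈ M, Function.Injective f) ∧ id ∈ M ∧ ∀ f ∈ M, ∀ g ∈ M, rcomp f g ∈ M

/-- `M` is normal: closed under conjugation by permutations of `Ω`. -/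
def IsNormalSet (M : Set (Ω → Ω)) : Prop :=
  ∀ f ∈ M, ∀ a : Equiv.Perm Ω, conjBy a f ∈ M

/-- `M_ℕ = {|Ω \ (Ω)f| : f ∈ M} ∩ ℕ`. -/
def MN (M : Set (Ω → Ω)) : Set ℕ := {n | ∃ f ∈ M, coim f = n}

/-- `S(N) = {f ∈ Inj(Ω) : |Ω \ (Ω)f| ∈ N \ {0}}`. -/
def SN (Ω : Type u) (N : Set ℕ) : Set (Ω → Ω) :=
  {f | Function.Injective f ∧ ∃ n ∈ N, n ≠ 0 ∧ coim f = n}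

/-- `{f ∈ Inj(Ω) : |Ω \ (Ω)f| ∈ N \ (G ∪ {0})}`. -/
def SNdiff (Ω : Type u) (N : AddSubmonoid ℕ) (G : Set ℕ) : Set (Ω → Ω) :=
  {f | Function.Injective f ∧ ∃ n : ℕ, n ∈ N ∧ n ∉ G ∧ n ≠ 0 ∧ coim f = n}

/-- `G` is the (unique) minimal generating set of the additive submonoid `N ⊆ ℕ`:
it generates `N` and is contained in every generating set of `N`. -/
def IsMinGenSet (N : AddSubmonoid ℕ) (G : Set ℕ) : Prop :=
  AddSubmonoid.closure G = N ∧ ∀ G' : Set ℕ, AddSubmonoid.closure G' = N → G ⊆ G'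

/-- `B` is `≈_fin`-closed. -/
def FinEquivClosed (B : Set (Ω → Ω)) : Prop :=
  ∀ f g : Ω → Ω, Function.Injective f → Function.Injective g →
    FinEquiv f g → (f ∈ B ↔ g ∈ B)

/-- `B` is `≈_even`-closed. -/
def EvenEquivClosed (B : Set (Ω → Ω)) : Prop :=
  ∀ f g : Ω → Ω, Function.Injective f → Function.Injective g →
    EvenEquiv f g → (f ∈ B ↔ g ∈ B)

namespace Stmt12Aux

def Rl (F : Ω → Ω) (a b : Ω) : Prop := ∃ k l : ℕ, F^[k] a = F^[l] b

def cls (F : Ω → Ω) (a : Ω) : Set Ω := {b | Rl F b a}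

lemma rl_refl (F : Ω → Ω) (a : Ω) : Rl F a a := ⟨0, 0, rfl⟩

lemma rl_symm {F : Ω → Ω} {a b : Ω} (h : Rl F a b) : Rl F b a := by
  obtain ⟨k, l, e⟩ := h; exact ⟨l, k, e.symm⟩

lemma rl_trans {F : Ω → Ω} {a b c : Ω} (h1 : Rl F a b) (h2 : Rl F b c) : Rl F a c := by
  obtain ⟨k, l, e1⟩ := h1
  obtain ⟨k', l', e2⟩ := h2
  refine ⟨k' + k, l + l', ?_⟩
  calc F^[k' + k] a = F^[k'] (F^[k] a) := Function.iterate_add_apply F k' k a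
    _ = F^[k'] (F^[l] b) := by rw [e1]
    _ = F^[l] (F^[k'] b) := by
        rw [← Function.iterate_add_apply, ← Function.iterate_add_apply, Nat.add_comm]
    _ = F^[l] (F^[l'] c) := by rw [e2]
    _ = F^[l + l'] c := (Function.iterate_add_apply F l l' c).symm

lemma inv_iter {F : Ω → Ω} {s : Set Ω} (h : ∀ α, F α ∈ s ↔ α ∈ s) (k : ℕ) (α : Ω) :
    F^[k] α ∈ s ↔ α ∈ s := by
  induction k with
  | zero => exact Iff.rfl
  | succ k ih => rw [Function.iterate_succ_apply', h, ih]

lemma inv_mem_of_rel {F : Ω → Ω} {s : Set Ω} (h : ∀ α, F α ∈ s ↔ α ∈ s) {a b : Ω}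
    (hb : b ∈ s) (hr : Rl F a b) : a ∈ s := by
  obtain ⟨k, l, e⟩ := hr
  have h1 : F^[l] b ∈ s := (inv_iter h l b).mpr hb
  rw [← e] at h1
  exact (inv_iter h k a).mp h1

lemma rl_self_apply (F : Ω → Ω) (a : Ω) : Rl F a (F a) := ⟨1, 0, by simp⟩

lemma mem_cls_self (F : Ω → Ω) (a : Ω) : a ∈ cls F a := rl_refl F a

lemma cls_inv (F : Ω → Ω) (a : Ω) : ∀ α, F α ∈ cls F a ↔ α ∈ cls F a := by
  intro α
  constructor
  · intro hfa; exact rl_trans (rl_self_apply F α) hfa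
  · intro hα; exact rl_trans (rl_symm (rl_self_apply F α)) hα

lemma cls_eq_of_mem {F : Ω → Ω} {a b : Ω} (h : b ∈ cls F a) : cls F b = cls F a := by
  ext c; exact ⟨fun hc => rl_trans hc h, fun hc => rl_trans hc (rl_symm h)⟩

lemma cls_isCycle (F : Ω → Ω) (a : Ω) : IsCycleUnder F (cls F a) := by
  refine ⟨⟨a, mem_cls_self F a⟩, cls_inv F a, ?_⟩
  intro t hts htne hinv
  obtain ⟨b, hb⟩ := htne
  apply Set.Subset.antisymm hts
  intro c hc
  exact inv_mem_of_rel hinv hb (rl_trans hc (rl_symm (hts hb)))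

lemma isCycle_iff {F : Ω → Ω} {s : Set Ω} : IsCycleUnder F s ↔ ∃ a, s = cls F a := by
  constructor
  · rintro ⟨⟨a, ha⟩, hinv, hmin⟩
    refine ⟨a, ?_⟩
    have h1 : cls F a ⊆ s := fun c hc => inv_mem_of_rel hinv ha hc
    exact (hmin (cls F a) h1 ⟨a, mem_cls_self F a⟩ (cls_inv F a)).symm
  · rintro ⟨a, rfl⟩; exact cls_isCycle F a

lemma iter_agree {f g : Ω → Ω} {x y : Ω} (hfg : ∀ z, z ≠ x → z ≠ y → g z = f z)
    {z : Ω} {k : ℕ} (h : ∀ i < k, f^[i] z ≠ x ∧ f^[i] z ≠ y) : g^[k] z = f^[k] z := by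
  induction k with
  | zero => rfl
  | succ k ih =>
    rw [Function.iterate_succ_apply', Function.iterate_succ_apply',
      ih (fun i hi => h i (Nat.lt_succ_of_lt hi)),
      hfg _ (h k (Nat.lt_succ_self k)).1 (h k (Nat.lt_succ_self k)).2]

lemma iter_mul_period {F : Ω → Ω} {a : Ω} {p : ℕ} (h : F^[p] a = a) (c : ℕ) :
    F^[p * c] a = a := by
  induction c with
  | zero => rfl
  | succ c ih => rw [Nat.mul_succ, Function.iterate_add_apply, h, ih]

lemma iter_mod_period {F : Ω → Ω} {a : Ω} {p : ℕ} (h : F^[p] a = a) (m : ℕ) :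
    F^[m] a = F^[m % p] a := by
  conv_lhs => rw [← Nat.mod_add_div m p]
  rw [Function.iterate_add_apply, iter_mul_period h]

lemma mem_cls_of_periodic {F : Ω → Ω} (hF : Function.Injective F) {a b : Ω} {p : ℕ}
    (hp : 0 < p) (h : F^[p] a = a) (hb : b ∈ cls F a) : ∃ j < p, b = F^[j] a := by
  obtain ⟨k, l, e⟩ := hb
  have hk : k ≤ l + p * k :=
    le_trans (Nat.le_mul_of_pos_left k hp) (Nat.le_add_left _ _)
  have e2 : F^[l + p * k] a = F^[l] a := by
    rw [Function.iterate_add_apply, iter_mul_period h]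
  have e3 : F^[k] b = F^[k] (F^[l + p * k - k] a) := by
    rw [← Function.iterate_add_apply, Nat.add_sub_cancel' hk, e2, e]
  have e4 : b = F^[l + p * k - k] a := (hF.iterate k) e3
  refine ⟨(l + p * k - k) % p, Nat.mod_lt _ hp, ?_⟩
  rw [e4, iter_mod_period h]

lemma cls_finite_of_periodic {F : Ω → Ω} (hF : Function.Injective F) {a : Ω} {p : ℕ}
    (hp : 0 < p) (h : F^[p] a = a) : (cls F a).Finite := by
  apply Set.Finite.subset ((Set.finite_Iio p).image (fun j => F^[j] a))
  intro b hb
  obtain ⟨j, hj, rfl⟩ := mem_cls_of_periodic hF hp h hb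
  exact ⟨j, hj, rfl⟩

end Stmt12Aux

open Stmt12Aux

theorem stmt_12 [Countable Ω] [Infinite Ω] (f : Ω → Ω) (hf : Function.Injective f)
    (hcy : ∃ s : Set Ω, IsCycleUnder f s ∧ s.Infinite) (n : ℕ) (hn : 0 < n)
    (hpos : 0 < Cn f n) :
    ∃ h : Equiv.Perm Ω, IsTransposition h ∧
      Cn (⇑h ∘ f) n + 1 = Cn f n ∧
      ∀ m : ℕ, 0 < m → m ≠ n → Cn (⇑h ∘ f) m = Cn f m := by
  classical
  -- extract a finite cycle S of cardinality n and an infinite cycle T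
  have hpos' : Nonempty {s : Set Ω // IsCycleUnder f s ∧ Cardinal.mk ↥s = n} :=
    Cardinal.mk_ne_zero_iff.mp (by rw [← Cn]; exact hpos.ne')
  obtain ⟨⟨S, hScyc, hScard⟩⟩ := hpos'
  obtain ⟨T, hTcyc, hTinf⟩ := hcy
  obtain ⟨y, hTy⟩ := isCycle_iff.mp hTcyc
  obtain ⟨x, hSx⟩ := isCycle_iff.mp hScyc
  have hx : x ∈ S := by rw [hSx]; exact mem_cls_self f x
  have hy : y ∈ T := by rw [hTy]; exact mem_cls_self f y
  have hSfin : S.Finite :=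
    Cardinal.lt_aleph0_iff_set_finite.mp (by rw [hScard]; exact Cardinal.nat_lt_aleph0 n)
  have hST : ∀ z, z ∈ S → z ∉ T := by
    intro z hzS hzT
    have e1 : cls f z = cls f x := cls_eq_of_mem (by rw [← hSx]; exact hzS)
    have e2 : cls f z = cls f y := cls_eq_of_mem (by rw [← hTy]; exact hzT)
    have : S = T := by rw [hSx, hTy, ← e1, ← e2]
    exact hTinf (this ▸ hSfin)
  have hSinv : ∀ α, f α ∈ S ↔ α ∈ S := hScyc.2.1
  have hTinv : ∀ α, f α ∈ T ↔ α ∈ T := hTcyc.2.1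
  have hxy : x ≠ y := fun e => hST x hx (e ▸ hy)
  have hab : f x ≠ f y := fun e => hxy (hf e)
  have hfxS : f x ∈ S := (hSinv x).mpr hx
  have hfyT : f y ∈ T := (hTinv y).mpr hy
  -- the period of x
  have hper : ∃ p, 0 < p ∧ f^[p] x = x := by
    have : Finite ↥S := hSfin
    obtain ⟨a, b, hne, e⟩ := Finite.exists_ne_map_eq_of_infinite
      (fun m : ℕ => (⟨f^[m] x, (inv_iter hSinv m x).mpr hx⟩ : ↥S))
    have e' : f^[a] x = f^[b] x := congrArg Subtype.val e
    rcases lt_trichotomy a b with hlt | heq | hlt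
    · refine ⟨b - a, Nat.sub_pos_of_lt hlt, ?_⟩
      apply (hf.iterate a)
      rw [← Function.iterate_add_apply, Nat.add_sub_cancel' hlt.le, e']
    · exact absurd heq hne
    · refine ⟨a - b, Nat.sub_pos_of_lt hlt, ?_⟩
      apply (hf.iterate b)
      rw [← Function.iterate_add_apply, Nat.add_sub_cancel' hlt.le, e'.symm]
  set p := Nat.find hper with hpdef
  have hp : 0 < p ∧ f^[p] x = x := Nat.find_spec hper
  have hxap : ∀ q, 0 < q → q < p → f^[q] x ≠ x :=
    fun q h1 h2 e => Nat.find_min hper h2 ⟨h1, e⟩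
  -- y is aperiodic
  have hyap : ∀ m, 0 < m → f^[m] y ≠ y := by
    intro m hm e
    exact hTinf (hTy ▸ cls_finite_of_periodic hf hm e)
  -- the transposition and the new map g
  set h : Equiv.Perm Ω := Equiv.swap (f x) (f y) with hhdef
  set g : Ω → Ω := ⇑h ∘ f with hgdef
  have hgx : g x = f y := by
    simp only [hgdef, Function.comp_apply, hhdef, Equiv.swap_apply_left]
  have hgy : g y = f x := by
    simp only [hgdef, Function.comp_apply, hhdef, Equiv.swap_apply_right]
  have hgz : ∀ z, z ≠ x → z ≠ y → g z = f z := by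
    intro z h1 h2
    simp only [hgdef, Function.comp_apply, hhdef]
    exact Equiv.swap_apply_of_ne_of_ne (fun e => h1 (hf e)) (fun e => h2 (hf e))
  -- every iterate of a member of T differs from x, and of S from y
  have notxT : ∀ β ∈ T, β ≠ x := fun β hβ e => hST x hx (e ▸ hβ)
  have notyS : ∀ z ∈ S, z ≠ y := fun z hz e => hST z hz (e ▸ hy)
  -- K1 : everything in S is g-related to x
  have K1 : ∀ z ∈ S, Rl g z x := by
    intro z hz
    obtain ⟨j, hj, rfl⟩ := mem_cls_of_periodic hf hp.1 hp.2 (by rw [← hSx]; exact hz)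
    rcases Nat.eq_zero_or_pos j with rfl | hj0
    · exact rl_refl g _
    · refine ⟨p - j, 0, ?_⟩
      have hmem : ∀ i, f^[i] (f^[j] x) = f^[i + j] x := fun i =>
        (Function.iterate_add_apply f i j x).symm
      have key : g^[p - j] (f^[j] x) = f^[p - j] (f^[j] x) := by
        apply iter_agree hgz
        intro i hi
        rw [hmem i]
        have hij : i + j < p := by omega
        constructor
        · exact hxap (i + j) (by omega) hij
        · exact notyS _ ((inv_iter hSinv (i + j) x).mpr hx)
      rw [key, hmem (p - j)]
      have : p - j + j = p := Nat.sub_add_cancel hj.le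
      rw [this, hp.2]
      simp
  -- K3 : g^[p] y = x
  have K3 : g^[p] y = x := by
    have h1 : p = (p - 1) + 1 := (Nat.succ_pred_eq_of_pos hp.1).symm
    rw [h1, Function.iterate_succ_apply, hgy]
    have key : g^[p - 1] (f x) = f^[p - 1] (f x) := by
      apply iter_agree hgz
      intro i hi
      rw [← Function.iterate_succ_apply]
      constructor
      · exact hxap (i + 1) (Nat.succ_pos i) (by omega)
      · exact notyS _ ((inv_iter hSinv (i + 1) x).mpr hx)
    rw [key, ← Function.iterate_succ_apply, Nat.succ_eq_add_one, ← h1, hp.2]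
  -- K4 : everything in T is g-related to y
  have K4 : ∀ β ∈ T, Rl g β y := by
    intro β hβ
    have hiterT : ∀ i, f^[i] β ∈ T := fun i => (inv_iter hTinv i β).mpr hβ
    by_cases hc : ∃ i, f^[i] β = y
    · refine ⟨Nat.find hc, 0, ?_⟩
      have key : g^[Nat.find hc] β = f^[Nat.find hc] β :=
        iter_agree hgz fun i hi => ⟨notxT _ (hiterT i), Nat.find_min hc hi⟩
      rw [key, Nat.find_spec hc]
      simp
    · push_neg at hc
      obtain ⟨k, l, e⟩ := (by rw [← hTy]; exact hβ : β ∈ cls f y)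
      have hl : 0 < l := by
        rcases Nat.eq_zero_or_pos l with rfl | h0
        · exact absurd e (by simpa using hc k)
        · exact h0
      have hk' : g^[k] β = f^[k] β :=
        iter_agree hgz fun i hi => ⟨notxT _ (hiterT i), hc i⟩
      have hy' : g^[p + l] y = f^[l] y := by
        rw [Nat.add_comm, Function.iterate_add_apply, K3]
        have h1 : l = (l - 1) + 1 := (Nat.succ_pred_eq_of_pos hl).symm
        rw [h1, Function.iterate_succ_apply, hgx]
        have key : g^[l - 1] (f y) = f^[l - 1] (f y) := by
          apply iter_agree hgz
          intro i hi
          rw [← Function.iterate_succ_apply]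
          constructor
          · exact notxT _ ((inv_iter hTinv (i + 1) y).mpr hy)
          · exact hyap (i + 1) (Nat.succ_pos i)
        rw [key, ← Function.iterate_succ_apply, Nat.succ_eq_add_one, ← h1]
      exact ⟨k, p + l, by rw [hk', e, ← hy']⟩
  -- x is g-related to y
  have RxY : Rl g x y := by
    refine rl_trans ?_ (K4 (f y) hfyT)
    exact ⟨1, 0, by simp [hgx]⟩
  have hU : ∀ u ∈ S ∪ T, Rl g u y := by
    rintro u (hu | hu)
    · exact rl_trans (K1 u hu) RxY
    · exact K4 u hu
  have hUinv : ∀ α, g α ∈ S ∪ T ↔ α ∈ S ∪ T := by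
    intro α
    by_cases h1 : α = x
    · subst h1; rw [hgx]; exact iff_of_true (Or.inr hfyT) (Or.inl hx)
    by_cases h2 : α = y
    · subst h2; rw [hgy]; exact iff_of_true (Or.inl hfxS) (Or.inr hy)
    · rw [hgz α h1 h2]; exact or_congr (hSinv α) (hTinv α)
  have hUcls : S ∪ T = cls g y := by
    apply Set.Subset.antisymm
    · exact fun u hu => hU u hu
    · exact fun β hβ => inv_mem_of_rel hUinv (Or.inr hy) hβ
  -- classes outside S ∪ T agree
  have hout : ∀ β, β ∉ S ∪ T → cls g β = cls f β := by
    intro β hβ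
    have hfd : ∀ γ ∈ cls f β, γ ∉ S ∪ T := by
      rintro γ hγ (hγU | hγU)
      · apply hβ
        have e1 : cls f γ = cls f β := cls_eq_of_mem hγ
        have e2 : cls f γ = cls f x := cls_eq_of_mem (by rw [← hSx]; exact hγU)
        exact Or.inl (by rw [hSx, ← e2, e1]; exact mem_cls_self f β)
      · apply hβ
        have e1 : cls f γ = cls f β := cls_eq_of_mem hγ
        have e2 : cls f γ = cls f y := cls_eq_of_mem (by rw [← hTy]; exact hγU)
        exact Or.inr (by rw [hTy, ← e2, e1]; exact mem_cls_self f β)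
    have hginv : ∀ α, g α ∈ cls f β ↔ α ∈ cls f β := by
      intro α
      by_cases h1 : α = x
      · subst h1; rw [hgx]
        exact iff_of_false (fun hm => hfd _ hm (Or.inr hfyT)) (fun hm => hfd _ hm (Or.inl hx))
      by_cases h2 : α = y
      · subst h2; rw [hgy]
        exact iff_of_false (fun hm => hfd _ hm (Or.inl hfxS)) (fun hm => hfd _ hm (Or.inr hy))
      · rw [hgz α h1 h2]; exact cls_inv f β α
    have hsub : cls g β ⊆ cls f β := fun γ hγ =>
      inv_mem_of_rel hginv (mem_cls_self f β) hγ
    have hgd : ∀ γ ∈ cls g β, γ ∉ S ∪ T := fun γ hγ => hfd γ (hsub hγ)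
    have hfinv : ∀ α, f α ∈ cls g β ↔ α ∈ cls g β := by
      intro α
      by_cases h1 : α = x
      · subst h1
        exact iff_of_false (fun hm => hgd _ hm (Or.inl hfxS)) (fun hm => hgd _ hm (Or.inl hx))
      by_cases h2 : α = y
      · subst h2
        exact iff_of_false (fun hm => hgd _ hm (Or.inr hfyT)) (fun hm => hgd _ hm (Or.inr hy))
      · rw [← hgz α h1 h2]; exact cls_inv g β α
    exact Set.Subset.antisymm hsub (fun γ hγ => inv_mem_of_rel hfinv (mem_cls_self g β) hγ)
  -- finite g-cycles are f-cycles
  have L1 : ∀ s : Set Ω, IsCycleUnder g s → s.Finite → IsCycleUnder f s := by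
    intro s hs hsfin
    obtain ⟨β, rfl⟩ := isCycle_iff.mp hs
    have hβ : β ∉ S ∪ T := by
      intro hm
      have e1 : cls g β = S ∪ T :=
        (cls_eq_of_mem (by rw [← hUcls]; exact hm)).trans hUcls.symm
      have : T ⊆ cls g β := by rw [e1]; exact Set.subset_union_right
      exact hTinf (hsfin.subset this)
    rw [hout β hβ]
    exact cls_isCycle f β
  -- f-cycles other than S and T are g-cycles
  have L2 : ∀ s : Set Ω, IsCycleUnder f s → s ≠ S → s ≠ T → IsCycleUnder g s := by
    intro s hs hsS hsT
    obtain ⟨β, rfl⟩ := isCycle_iff.mp hs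
    have hβ : β ∉ S ∪ T := by
      rintro (h1 | h1)
      · exact hsS ((cls_eq_of_mem (by rw [← hSx]; exact h1)).trans hSx.symm)
      · exact hsT ((cls_eq_of_mem (by rw [← hTy]; exact h1)).trans hTy.symm)
    rw [← hout β hβ]
    exact cls_isCycle g β
  refine ⟨h, ⟨f x, f y, hab, Equiv.swap_apply_left _ _, Equiv.swap_apply_right _ _,
    fun z h1 h2 => Equiv.swap_apply_of_ne_of_ne h1 h2⟩, ?_, ?_⟩
  · -- Cn g n + 1 = Cn f n
    have hset : {s : Set Ω | IsCycleUnder f s ∧ Cardinal.mk ↥s = (n : Cardinal)} =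
        insert S {s : Set Ω | IsCycleUnder g s ∧ Cardinal.mk ↥s = (n : Cardinal)} := by
      ext s
      simp only [Set.mem_insert_iff, Set.mem_setOf_eq]
      constructor
      · rintro ⟨hc, hcard⟩
        by_cases e : s = S
        · exact Or.inl e
        · have hsfin : s.Finite := Cardinal.lt_aleph0_iff_set_finite.mp
            (by rw [hcard]; exact Cardinal.nat_lt_aleph0 n)
          have hsT : s ≠ T := fun e' => hTinf (e' ▸ hsfin)
          exact Or.inr ⟨L2 s hc e hsT, hcard⟩
      · rintro (rfl | ⟨hc, hcard⟩)
        · exact ⟨hScyc, hScard⟩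
        · have hsfin : s.Finite := Cardinal.lt_aleph0_iff_set_finite.mp
            (by rw [hcard]; exact Cardinal.nat_lt_aleph0 n)
          exact ⟨L1 s hc hsfin, hcard⟩
    have hSnot : S ∉ {s : Set Ω | IsCycleUnder g s ∧ Cardinal.mk ↥s = (n : Cardinal)} := by
      rintro ⟨hc, -⟩
      obtain ⟨β, hβeq⟩ := isCycle_iff.mp hc
      have hβU : β ∈ S ∪ T := Or.inl (hβeq ▸ mem_cls_self g β)
      have e1 : cls g β = S ∪ T :=
        (cls_eq_of_mem (by rw [← hUcls]; exact hβU)).trans hUcls.symm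
      have e2 : S = S ∪ T := hβeq.trans e1
      have : T ⊆ S := by rw [e2]; exact Set.subset_union_right
      exact hTinf (hSfin.subset this)
    calc Cn g n + 1
        = Cardinal.mk ↥{s : Set Ω | IsCycleUnder g s ∧ Cardinal.mk ↥s = (n : Cardinal)} + 1 :=
          rfl
      _ = Cardinal.mk ↥(insert S {s : Set Ω | IsCycleUnder g s ∧ Cardinal.mk ↥s = (n : Cardinal)}) :=
          (Cardinal.mk_insert hSnot).symm
      _ = Cardinal.mk ↥{s : Set Ω | IsCycleUnder f s ∧ Cardinal.mk ↥s = (n : Cardinal)} := by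
          rw [hset]
      _ = Cn f n := rfl
  · -- other counts agree
    intro m hm hmn
    apply Cardinal.mk_congr
    apply Equiv.subtypeEquivRight
    intro s
    constructor
    · rintro ⟨hc, hcard⟩
      have hsfin : s.Finite := Cardinal.lt_aleph0_iff_set_finite.mp
        (by rw [hcard]; exact Cardinal.nat_lt_aleph0 m)
      exact ⟨L1 s hc hsfin, hcard⟩
    · rintro ⟨hc, hcard⟩
      have hsfin : s.Finite := Cardinal.lt_aleph0_iff_set_finite.mp
        (by rw [hcard]; exact Cardinal.nat_lt_aleph0 m)
      have hsS : s ≠ S := by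
        rintro rfl
        exact hmn (Nat.cast_inj.mp (by rw [← hcard, hScard]))
      have hsT : s ≠ T := fun e' => hTinf (e' ▸ hsfin)
      exact ⟨L2 s hc hsS hsT, hcard⟩
end

section
/- Let h ∈ Fin(Ω), and let f ∈ Inj(Ω) be a map satisfying either (i) (f)C_open + (f)C_fwd ≥ 2, or (ii) (f)C_open + (f)C_fwd ≥ 1 and (f)C_n = ℵ₀ for some n ∈ ℤ₊. Then there exists g ∈ Alt(Ω) such that fh and fg have equivalent cycle decompositions (and hence so do hf and gf). -/
open Cardinal Function Set

universe u
variable {Ω : Type u}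

namespace StmtAux

theorem it_comm (u : Ω → Ω) (a b : ℕ) (x : Ω) : u^[a] (u^[b] x) = u^[b] (u^[a] x) := by
  rw [← Function.iterate_add_apply, ← Function.iterate_add_apply, Nat.add_comm]

theorem iterate_closed {u : Ω → Ω} {s : Set Ω} (hs : ∀ γ, u γ ∈ s ↔ γ ∈ s) :
    ∀ (k : ℕ) (γ), u^[k] γ ∈ s ↔ γ ∈ s := by
  intro k
  induction k with
  | zero => simp
  | succ k ih =>
    intro γ
    rw [Function.iterate_succ_apply, ih (u γ), hs]

def cyc (u : Ω → Ω) (x : Ω) : Set Ω := {y | ∃ m k : ℕ, u^[m] x = u^[k] y}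

theorem mem_cyc_self (u : Ω → Ω) (x : Ω) : x ∈ cyc u x := ⟨0, 0, rfl⟩

theorem iterate_mem_cyc (u : Ω → Ω) (x : Ω) (k : ℕ) : u^[k] x ∈ cyc u x := ⟨k, 0, rfl⟩

theorem cyc_closed (u : Ω → Ω) (x : Ω) : ∀ γ, u γ ∈ cyc u x ↔ γ ∈ cyc u x := by
  intro γ
  constructor
  · rintro ⟨m, k, hm⟩
    exact ⟨m, k + 1, by rw [Function.iterate_succ_apply, hm]⟩
  · rintro ⟨m, k, hm⟩
    refine ⟨1 + m, k, ?_⟩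
    rw [Function.iterate_add_apply, hm, it_comm]
    simp

theorem mem_cyc_symm {u : Ω → Ω} {x y : Ω} (h : y ∈ cyc u x) : x ∈ cyc u y := by
  obtain ⟨m, k, hm⟩ := h; exact ⟨k, m, hm.symm⟩

theorem mem_cyc_trans {u : Ω → Ω} {x y z : Ω} (h1 : y ∈ cyc u x) (h2 : z ∈ cyc u y) :
    z ∈ cyc u x := by
  obtain ⟨m, k, hm⟩ := h1
  obtain ⟨p, q, hp⟩ := h2
  refine ⟨p + m, k + q, ?_⟩
  rw [Function.iterate_add_apply, hm, it_comm, hp, ← Function.iterate_add_apply]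

theorem cyc_eq_of_mem {u : Ω → Ω} {x y : Ω} (h : y ∈ cyc u x) : cyc u y = cyc u x := by
  ext z
  exact ⟨fun hz => mem_cyc_trans h hz, fun hz => mem_cyc_trans (mem_cyc_symm h) hz⟩

theorem cyc_isCycle (u : Ω → Ω) (x : Ω) : IsCycleUnder u (cyc u x) := by
  refine ⟨⟨x, mem_cyc_self u x⟩, cyc_closed u x, ?_⟩
  intro t hts ⟨y, hy⟩ htcl
  apply Set.Subset.antisymm hts
  intro z hz
  have hyc : y ∈ cyc u x := hts hy
  obtain ⟨m, k, hm⟩ := hyc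
  obtain ⟨p, q, hp⟩ := hz
  have key : u^[p + k] y = u^[m + q] z := by
    rw [Function.iterate_add_apply, ← hm, it_comm, hp, ← Function.iterate_add_apply]
  have h1 : u^[p + k] y ∈ t := (iterate_closed htcl (p + k) y).mpr hy
  rw [key] at h1
  exact (iterate_closed htcl (m + q) z).mp h1

theorem isCycle_eq_cyc {u : Ω → Ω} {s : Set Ω} {x : Ω} (hs : IsCycleUnder u s) (hx : x ∈ s) :
    s = cyc u x := by
  have hsub : cyc u x ⊆ s := by
    rintro z ⟨m, k, hm⟩
    have h1 : u^[m] x ∈ s := (iterate_closed hs.2.1 m x).mpr hx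
    rw [hm] at h1
    exact (iterate_closed hs.2.1 k z).mp h1
  exact (hs.2.2 (cyc u x) hsub ⟨x, mem_cyc_self u x⟩ (cyc_closed u x)).symm

theorem cycle_eq_cycle {u : Ω → Ω} {s t : Set Ω} {x : Ω} (hs : IsCycleUnder u s)
    (ht : IsCycleUnder u t) (hxs : x ∈ s) (hxt : x ∈ t) : s = t := by
  rw [isCycle_eq_cyc hs hxs, isCycle_eq_cyc ht hxt]

theorem cyc_eq_range_fin_of_periodic {u : Ω → Ω} (hinj : Function.Injective u) {x : Ω} {k : ℕ}
    (hk : 0 < k) (hx : u^[k] x = x) :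
    cyc u x = Set.range (fun i : Fin k => u^[(i : ℕ)] x) := by
  set O := Set.range (fun i : Fin k => u^[(i : ℕ)] x) with hO
  have hsub : O ⊆ cyc u x := by rintro z ⟨i, rfl⟩; exact iterate_mem_cyc u x i
  have hne : O.Nonempty := ⟨x, ⟨⟨0, hk⟩, rfl⟩⟩
  have hcl : ∀ γ, u γ ∈ O ↔ γ ∈ O := by
    intro γ
    constructor
    · rintro ⟨⟨i, hi⟩, hiγ⟩
      simp only at hiγ
      rcases i with _ | j
      · refine ⟨⟨k - 1, Nat.sub_lt hk one_pos⟩, ?_⟩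
        have h2 : u (u^[k - 1] x) = u γ := by
          rw [← Function.iterate_succ_apply' u (k-1) x, show (k-1).succ = k from by omega, hx]
          exact hiγ
        exact hinj h2
      · refine ⟨⟨j, Nat.lt_of_succ_lt hi⟩, ?_⟩
        have h2 : u (u^[j] x) = u γ := by
          rw [← Function.iterate_succ_apply' u j x]; exact hiγ
        exact hinj h2
    · rintro ⟨⟨i, hi⟩, rfl⟩
      simp only
      rcases Nat.lt_or_ge (i + 1) k with h | h
      · exact ⟨⟨i + 1, h⟩, Function.iterate_succ_apply' u i x⟩
      · have hik : i + 1 = k := le_antisymm hi h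
        refine ⟨⟨0, hk⟩, ?_⟩
        show u^[0] x = u (u^[i] x)
        rw [← Function.iterate_succ_apply' u i x, show i.succ = k from by omega, hx]
        rfl
  exact ((cyc_isCycle u x).2.2 O hsub hne hcl).symm

theorem cyc_finite_of_periodic {u : Ω → Ω} (hinj : Function.Injective u) {x : Ω} {k : ℕ}
    (hk : 0 < k) (hx : u^[k] x = x) : (cyc u x).Finite := by
  rw [cyc_eq_range_fin_of_periodic hinj hk hx]
  exact Set.finite_range _

theorem nonperiodic_of_infinite {u : Ω → Ω} (hinj : Function.Injective u) {x : Ω}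
    (hx : (cyc u x).Infinite) : ∀ k, 0 < k → u^[k] x ≠ x := by
  intro k hk hkx
  exact hx (cyc_finite_of_periodic hinj hk hkx)

theorem orbit_injective {u : Ω → Ω} (hinj : Function.Injective u) {x : Ω}
    (hx : ∀ k, 0 < k → u^[k] x ≠ x) : Function.Injective fun k : ℕ => u^[k] x := by
  have key : ∀ i j : ℕ, i ≤ j → u^[i] x = u^[j] x → i = j := by
    intro i j hij hconf
    have h1 : u^[j] x = u^[i] (u^[j - i] x) := by
      rw [← Function.iterate_add_apply]
      congr 1
      omega
    rw [h1] at hconf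
    have h2 : x = u^[j - i] x := hinj.iterate i hconf
    by_contra hne
    exact hx (j - i) (by omega) h2.symm
  intro i j hconf
  rcases Nat.le_total i j with h | h
  · exact key i j h hconf
  · exact (key j i h hconf.symm).symm

theorem cyc_infinite_of_nonperiodic {u : Ω → Ω} [Infinite Ω] (hinj : Function.Injective u) {x : Ω}
    (hx : ∀ k, 0 < k → u^[k] x ≠ x) : (cyc u x).Infinite :=
  Set.infinite_of_injective_forall_mem (orbit_injective hinj hx) (iterate_mem_cyc u x)

theorem cyc_eq_orbit_of_not_mem_range {u : Ω → Ω} (hinj : Function.Injective u) {x : Ω}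
    (hx : x ∉ Set.range u) : cyc u x = Set.range fun k : ℕ => u^[k] x := by
  set O := Set.range fun k : ℕ => u^[k] x with hO
  have hsub : O ⊆ cyc u x := by rintro z ⟨i, rfl⟩; exact iterate_mem_cyc u x i
  have hne : O.Nonempty := ⟨x, ⟨0, rfl⟩⟩
  have hcl : ∀ γ, u γ ∈ O ↔ γ ∈ O := by
    intro γ
    constructor
    · rintro ⟨i, hiγ⟩
      rcases i with _ | j
      · exact absurd ⟨γ, hiγ.symm⟩ hx
      · refine ⟨j, ?_⟩
        have h2 : u (u^[j] x) = u γ := by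
          rw [← Function.iterate_succ_apply' u j x]; exact hiγ
        exact hinj h2
    · rintro ⟨i, rfl⟩
      exact ⟨i + 1, Function.iterate_succ_apply' u i x⟩
  exact ((cyc_isCycle u x).2.2 O hsub hne hcl).symm

theorem mem_range_of_mem_finite_cycle {u : Ω → Ω} [Infinite Ω] (hinj : Function.Injective u)
    {s : Set Ω} (hs : IsCycleUnder u s) (hfin : s.Finite) {x : Ω} (hx : x ∈ s) :
    x ∈ Set.range u := by
  by_contra hxr
  have hper : ∀ k, 0 < k → u^[k] x ≠ x := by
    intro k hk hkx
    apply hxr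
    refine ⟨u^[k - 1] x, ?_⟩
    rw [← Function.iterate_succ_apply' u (k-1) x, show (k-1).succ = k from by omega, hkx]
  have : (cyc u x).Infinite := cyc_infinite_of_nonperiodic hinj hper
  rw [← isCycle_eq_cyc hs hx] at this
  exact this hfin



-- ## swap and agreement lemmas

theorem isCycle_swap_comp [DecidableEq Ω] {u : Ω → Ω} {α β : Ω} {s : Set Ω} (hαs : α ∉ s) (hβs : β ∉ s)
    (hs : IsCycleUnder u s) : IsCycleUnder (⇑(Equiv.swap α β) ∘ u) s := by
  obtain ⟨hne, hcl, hmin⟩ := hs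
  have key : ∀ t ⊆ s, ∀ γ, ((Equiv.swap α β) (u γ) ∈ t ↔ u γ ∈ t) := by
    intro t hts γ
    by_cases hγ : u γ = α ∨ u γ = β
    · have h1 : u γ ∉ t := by
        intro hmem
        rcases hγ with h' | h' <;> rw [h'] at hmem
        · exact hαs (hts hmem)
        · exact hβs (hts hmem)
      have h2 : Equiv.swap α β (u γ) ∉ t := by
        intro hmem
        rcases hγ with h' | h' <;> rw [h'] at hmem
        · rw [Equiv.swap_apply_left] at hmem; exact hβs (hts hmem)
        · rw [Equiv.swap_apply_right] at hmem; exact hαs (hts hmem)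
      exact iff_of_false h2 h1
    · push_neg at hγ
      rw [Equiv.swap_apply_of_ne_of_ne hγ.1 hγ.2]
  refine ⟨hne, fun γ => ?_, fun t hts htne htcl => ?_⟩
  · show Equiv.swap α β (u γ) ∈ s ↔ γ ∈ s
    rw [key s Set.Subset.rfl γ, hcl]
  · refine hmin t hts htne fun γ => ?_
    rw [← key t hts γ]
    exact htcl γ

theorem swap_swap_comp [DecidableEq Ω] (u : Ω → Ω) (α β : Ω) :
    ⇑(Equiv.swap α β) ∘ (⇑(Equiv.swap α β) ∘ u) = u := by
  funext x
  simp [Equiv.swap_apply_self]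

theorem isCycle_swap_comp_iff [DecidableEq Ω] {u : Ω → Ω} {α β : Ω} {s : Set Ω} (hαs : α ∉ s) (hβs : β ∉ s) :
    IsCycleUnder u s ↔ IsCycleUnder (⇑(Equiv.swap α β) ∘ u) s := by
  constructor
  · exact isCycle_swap_comp hαs hβs
  · intro hs
    have := isCycle_swap_comp hαs hβs hs
    rwa [← Function.comp_assoc, Function.comp_assoc, swap_swap_comp] at this

theorem iterate_agree {w v : Ω → Ω} {p : Ω} {K : ℕ} (H : ∀ k < K, w (v^[k] p) = v^[k + 1] p) :
    ∀ k ≤ K, w^[k] p = v^[k] p := by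
  intro k hk
  induction k with
  | zero => rfl
  | succ k ih =>
    rw [Function.iterate_succ_apply' w k p, ih (Nat.le_of_succ_le hk),
      H k (Nat.lt_of_succ_le hk)]

theorem iterate_agree_all {w v : Ω → Ω} {p : Ω} (H : ∀ k, w (v^[k] p) = v^[k + 1] p) :
    ∀ k, w^[k] p = v^[k] p := by
  intro k
  exact iterate_agree (fun j _ => H j) k le_rfl

theorem exists_avoid_finset {v : Ω → Ω} (hinj : Function.Injective v) {x : Ω}
    (hx : (cyc v x).Infinite) (F : Finset Ω) :
    ∃ p ∈ cyc v x, ∀ k, v^[k] p ∉ F := by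
  classical
  induction F using Finset.induction_on with
  | empty => exact ⟨x, mem_cyc_self v x, fun k => Finset.notMem_empty _⟩
  | @insert a F ha ih =>
    obtain ⟨p, hp, havoid⟩ := ih
    by_cases hq : ∃ k, v^[k] p = a
    · obtain ⟨k, hk⟩ := hq
      refine ⟨v^[k + 1] p, ?_, ?_⟩
      · exact mem_cyc_trans hp (iterate_mem_cyc v p (k + 1))
      · intro j
        rw [← Function.iterate_add_apply]
        rw [Finset.mem_insert]
        push_neg
        constructor
        · intro hja
          rw [← hk] at hja
          have h1 : v^[j + (k + 1)] p = v^[k] (v^[j + 1] p) := by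
            rw [← Function.iterate_add_apply]
            congr 1
            omega
          rw [h1] at hja
          have h2 : v^[j + 1] p = p := hinj.iterate k hja
          have hnp : (cyc v p).Infinite := by
            rwa [cyc_eq_of_mem hp]
          exact nonperiodic_of_infinite hinj hnp (j + 1) (by omega) h2
        · exact havoid (j + (k + 1))
    · push_neg at hq
      refine ⟨p, hp, fun k => ?_⟩
      rw [Finset.mem_insert]
      push_neg
      exact ⟨hq k, havoid k⟩

theorem range_swap_comp [DecidableEq Ω] {u : Ω → Ω} {α β : Ω} (hα : α ∈ Set.range u) (hβ : β ∈ Set.range u) :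
    Set.range (⇑(Equiv.swap α β) ∘ u) = Set.range u := by
  ext y
  rw [Set.range_comp]
  constructor
  · rintro ⟨z, hz, rfl⟩
    by_cases h1 : z = α
    · subst h1; rwa [Equiv.swap_apply_left]
    by_cases h2 : z = β
    · subst h2; rwa [Equiv.swap_apply_right]
    · rwa [Equiv.swap_apply_of_ne_of_ne h1 h2]
  · intro hy
    refine ⟨Equiv.swap α β y, ?_, Equiv.swap_apply_self α β y⟩
    by_cases h1 : y = α
    · subst h1; rwa [Equiv.swap_apply_left]
    by_cases h2 : y = β
    · subst h2; rwa [Equiv.swap_apply_right]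
    · rwa [Equiv.swap_apply_of_ne_of_ne h1 h2]

-- ## key reach / inclusion lemma

theorem key_reach [DecidableEq Ω] {u : Ω → Ω} (hinj : Function.Injective u) {p a α β : Ω}
    {m : ℕ} (hm : 0 < m) (hp : p ∉ Set.range u) (ha : u a = α) (hα : u^[m] p = α)
    (hβ : ∀ j < m, u^[j] p ≠ β) :
    (⇑(Equiv.swap α β) ∘ u)^[m] p = β := by
  have ha' : a = u^[m - 1] p := by
    apply hinj
    rw [ha, ← Function.iterate_succ_apply' u (m - 1) p, show (m - 1).succ = m from by omega, hα]
  have hnotrange : ∀ i j : ℕ, i < j → u^[i] p ≠ u^[j] p := by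
    intro i j hij heq
    have h1 : u^[j] p = u^[i] (u^[j - i] p) := by
      rw [← Function.iterate_add_apply]; congr 1; omega
    rw [h1] at heq
    have h2 : p = u^[j - i] p := hinj.iterate i heq
    apply hp
    refine ⟨u^[j - i - 1] p, ?_⟩
    rw [← Function.iterate_succ_apply' u (j - i - 1) p, show (j - i - 1).succ = j - i from by omega]
    exact h2.symm
  have hagree : ∀ k ≤ m - 1, (⇑(Equiv.swap α β) ∘ u)^[k] p = u^[k] p := by
    apply iterate_agree
    intro k hk
    show Equiv.swap α β (u (u^[k] p)) = u^[k + 1] p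
    rw [← Function.iterate_succ_apply' u k p, show k.succ = k + 1 from rfl]
    have h1 : u^[k + 1] p ≠ α := by
      rw [← hα]
      exact hnotrange (k + 1) m (by omega)
    have h2 : u^[k + 1] p ≠ β := hβ (k + 1) (by omega)
    exact Equiv.swap_apply_of_ne_of_ne h1 h2
  rw [show m = (m - 1) + 1 from by omega, Function.iterate_succ_apply', hagree (m - 1) le_rfl]
  show Equiv.swap α β (u (u^[m - 1] p)) = β
  rw [← ha', ha, Equiv.swap_apply_left]

theorem incl_lemma [DecidableEq Ω] {u : Ω → Ω} (hinj : Function.Injective u) {α β p : Ω}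
    (hαr : α ∈ Set.range u) (hpcyc : p ∈ cyc u α) (hpr : p ∉ Set.range u)
    (hinfin : (cyc u α).Infinite)
    (hβ : ∀ j, u^[j] p = β → ∃ i < j, u^[i] p = α) :
    p ∈ cyc (⇑(Equiv.swap α β) ∘ u) β := by
  have hcycp : cyc u p = cyc u α := cyc_eq_of_mem hpcyc
  have hpinf : (cyc u p).Infinite := by rwa [hcycp]
  have hnonper : ∀ k, 0 < k → u^[k] p ≠ p := nonperiodic_of_infinite hinj hpinf
  have horbinj : Function.Injective fun k : ℕ => u^[k] p := orbit_injective hinj hnonper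
  have hαorb : α ∈ Set.range fun k : ℕ => u^[k] p := by
    rw [← cyc_eq_orbit_of_not_mem_range hinj hpr, hcycp]
    exact mem_cyc_self u α
  obtain ⟨m, hm0⟩ := hαorb
  have hm : 0 < m := by
    rcases Nat.eq_zero_or_pos m with h | h
    · subst h
      simp only [Function.iterate_zero_apply] at hm0
      rw [← hm0] at hαr
      exact absurd hαr hpr
    · exact h
  obtain ⟨a, ha⟩ := hαr
  have hβ' : ∀ j < m, u^[j] p ≠ β := by
    intro j hj hjβ
    obtain ⟨i, hi, hiα⟩ := hβ j hjβ
    have : i = m := horbinj (show u^[i] p = u^[m] p by rw [hiα]; exact hm0.symm)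
    omega
  have := key_reach hinj hm hpr ha hm0 hβ'
  exact ⟨0, m, this.symm⟩

theorem mk_eq_aleph0 [Countable Ω] {s : Set Ω} (hs : s.Infinite) :
    Cardinal.mk ↥s = Cardinal.aleph0 := by
  have h1 : Cardinal.mk ↥s ≤ Cardinal.aleph0 := Cardinal.mk_le_aleph0
  have h2 : Cardinal.aleph0 ≤ Cardinal.mk ↥s := by
    have : Infinite ↥s := Set.infinite_coe_iff.mpr hs
    exact Cardinal.aleph0_le_mk ↥s
  exact le_antisymm h1 h2

-- ## generic EquivCycleDecomp lemmas

theorem ecd_refl (f : Ω → Ω) : EquivCycleDecomp f f :=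
  ⟨Equiv.refl _, fun _ => ⟨rfl, Iff.rfl⟩⟩

theorem ecd_symm {f g : Ω → Ω} (h : EquivCycleDecomp f g) : EquivCycleDecomp g f := by
  obtain ⟨e, he⟩ := h
  refine ⟨e.symm, fun t => ?_⟩
  have := he (e.symm t)
  rw [e.apply_symm_apply] at this
  exact ⟨this.1.symm, this.2.symm⟩

theorem ecd_trans {f g h : Ω → Ω} (h1 : EquivCycleDecomp f g) (h2 : EquivCycleDecomp g h) :
    EquivCycleDecomp f h := by
  obtain ⟨e1, he1⟩ := h1
  obtain ⟨e2, he2⟩ := h2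
  exact ⟨e1.trans e2, fun s => ⟨(he1 s).1.trans (he2 (e1 s)).1, (he1 s).2.trans (he2 (e1 s)).2⟩⟩

theorem isCycle_image {w : Ω → Ω} (a : Equiv.Perm Ω) {s : Set Ω} (hs : IsCycleUnder w s) :
    IsCycleUnder (⇑a ∘ w ∘ ⇑a.symm) (⇑a '' s) := by
  obtain ⟨hne, hcl, hmin⟩ := hs
  have hmem : ∀ (z : Ω) (t : Set Ω), z ∈ ⇑a.symm '' t ↔ a z ∈ t := by
    intro z t
    constructor
    · rintro ⟨y, hy, rfl⟩; rwa [Equiv.apply_symm_apply]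
    · intro h; exact ⟨a z, h, Equiv.symm_apply_apply a z⟩
  refine ⟨hne.image _, fun γ => ?_, fun t hts htne htcl => ?_⟩
  · show a (w (a.symm γ)) ∈ ⇑a '' s ↔ γ ∈ ⇑a '' s
    rw [a.injective.mem_set_image, hcl]
    constructor
    · intro h
      exact ⟨a.symm γ, h, Equiv.apply_symm_apply a γ⟩
    · rintro ⟨y, hy, rfl⟩
      rwa [Equiv.symm_apply_apply]
  · have hsub : ⇑a.symm '' t ⊆ s := by
      rintro z ⟨y, hy, rfl⟩
      obtain ⟨x, hx, hxy⟩ := hts hy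
      rw [← hxy, Equiv.symm_apply_apply]
      exact hx
    have hclosed : ∀ γ, w γ ∈ ⇑a.symm '' t ↔ γ ∈ ⇑a.symm '' t := by
      intro γ
      rw [hmem, hmem]
      have := htcl (a γ)
      show _ ↔ _
      rw [← this]
      show a (w γ) ∈ t ↔ (a ∘ w ∘ ⇑a.symm) (a γ) ∈ t
      simp [Equiv.symm_apply_apply]
    have heq : ⇑a.symm '' t = s := hmin _ hsub (htne.image _) hclosed
    rw [← heq, Equiv.image_symm_image]

theorem fwd_image {w : Ω → Ω} (a : Equiv.Perm Ω) {s : Set Ω} :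
    IsForwardCycle w s ↔ IsForwardCycle (⇑a ∘ w ∘ ⇑a.symm) (⇑a '' s) := by
  have hrange : Set.range (⇑a ∘ w ∘ ⇑a.symm) = ⇑a '' Set.range w := by
    rw [Set.range_comp, Function.Surjective.range_comp a.symm.surjective]
  have hdiff : (⇑a '' s) \ Set.range (⇑a ∘ w ∘ ⇑a.symm) = ⇑a '' (s \ Set.range w) := by
    rw [hrange, Set.image_diff a.injective]
  have hinf : s.Infinite ↔ (⇑a '' s).Infinite :=
    (Set.infinite_image_iff a.injective.injOn).symm
  constructor
  · rintro ⟨h1, h2, h3⟩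
    refine ⟨isCycle_image a h1, hinf.mp h2, ?_⟩
    rw [hdiff]
    exact h3.image _
  · rintro ⟨h1, h2, h3⟩
    have h1' : IsCycleUnder w s := by
      have := isCycle_image a.symm h1
      have heq : ⇑a.symm ∘ (⇑a ∘ w ∘ ⇑a.symm) ∘ ⇑a.symm.symm = w := by
        funext z; simp
      have heq2 : ⇑a.symm '' (⇑a '' s) = s := Equiv.symm_image_image a s
      rwa [heq, heq2] at this
    refine ⟨h1', ?_, ?_⟩
    · exact hinf.mpr h2
    · rw [hdiff] at h3
      obtain ⟨y, hy⟩ := h3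
      obtain ⟨z, hz, rfl⟩ := hy
      exact ⟨z, hz⟩

theorem ecd_conj (a : Equiv.Perm Ω) (w : Ω → Ω) :
    EquivCycleDecomp w (⇑a ∘ w ∘ ⇑a.symm) := by
  have hback : ∀ t : Set Ω, IsCycleUnder (⇑a ∘ w ∘ ⇑a.symm) t → IsCycleUnder w (⇑a.symm '' t) := by
    intro t ht
    have := isCycle_image a.symm ht
    have heq : ⇑a.symm ∘ (⇑a ∘ w ∘ ⇑a.symm) ∘ ⇑a.symm.symm = w := by funext z; simp
    rwa [heq] at this
  refine ⟨⟨fun s => ⟨⇑a '' s.1, isCycle_image a s.2⟩, fun t => ⟨⇑a.symm '' t.1, hback t.1 t.2⟩,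
    fun s => ?_, fun t => ?_⟩, fun s => ?_⟩
  · exact Subtype.ext (Equiv.symm_image_image a s.1)
  · exact Subtype.ext (Equiv.image_symm_image a t.1)
  · constructor
    · exact (Cardinal.mk_image_eq a.injective).symm
    · exact fwd_image a

-- ## inclusion into the new cycle

theorem incl2 [DecidableEq Ω] {u : Ω → Ω} (hinj : Function.Injective u) {γ δ p : Ω}
    (hγr : γ ∈ Set.range u) (hδ : δ ∉ cyc u γ) (hγi : (cyc u γ).Infinite)
    (hp : p ∈ cyc u γ) (hpr : p ∉ Set.range u) :
    p ∈ cyc (⇑(Equiv.swap γ δ) ∘ u) δ := by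
  refine incl_lemma hinj hγr hp hpr hγi fun j hj => ?_
  exfalso
  apply hδ
  rw [← hj, ← cyc_eq_of_mem hp]
  exact iterate_mem_cyc u p j

theorem diff_lemma [DecidableEq Ω] {u : Ω → Ω} (hinj : Function.Injective u) {α β : Ω}
    (hαr : α ∈ Set.range u) (hβr : β ∈ Set.range u)
    (hbo : β ∉ cyc u α) (hao : α ∉ cyc u β)
    (hαi : (cyc u α).Infinite) (hβi : (cyc u β).Infinite)
    (hne' : cyc (⇑(Equiv.swap α β) ∘ u) α ≠ cyc (⇑(Equiv.swap α β) ∘ u) β) :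
    cyc (⇑(Equiv.swap α β) ∘ u) β \ Set.range (⇑(Equiv.swap α β) ∘ u)
      = cyc u α \ Set.range u := by
  set u' := ⇑(Equiv.swap α β) ∘ u with hu'def
  have hrange : Set.range u' = Set.range u := range_swap_comp hαr hβr
  ext p
  simp only [Set.mem_diff, hrange]
  constructor
  · rintro ⟨hp, hpr⟩
    refine ⟨?_, hpr⟩
    by_cases hα_in : α ∈ cyc u p
    · rw [cyc_eq_of_mem hα_in]
      exact mem_cyc_self u p
    by_cases hβ_in : β ∈ cyc u p
    · exfalso
      have hpβ : p ∈ cyc u β := by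
        rw [cyc_eq_of_mem hβ_in]
        exact mem_cyc_self u p
      have h2 : p ∈ cyc (⇑(Equiv.swap β α) ∘ u) α := incl2 hinj hβr hao hβi hpβ hpr
      rw [Equiv.swap_comm β α] at h2
      exact hne' ((cyc_eq_of_mem h2).symm.trans (cyc_eq_of_mem hp))
    · exfalso
      have hcyc' : IsCycleUnder u' (cyc u p) := isCycle_swap_comp hα_in hβ_in (cyc_isCycle u p)
      have heq : cyc u p = cyc u' β :=
        cycle_eq_cycle hcyc' (cyc_isCycle u' β) (mem_cyc_self u p) hp
      apply hβ_in
      rw [heq]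
      exact mem_cyc_self u' β
  · rintro ⟨hp, hpr⟩
    exact ⟨incl2 hinj hαr hbo hαi hp hpr, hpr⟩

-- ## the two-infinite-cycles swap lemma

theorem S1 [Countable Ω] [Infinite Ω] [DecidableEq Ω] {u : Ω → Ω}
    (hinj : Function.Injective u) {α β : Ω}
    (hαr : α ∈ Set.range u) (hβr : β ∈ Set.range u)
    (hne : cyc u α ≠ cyc u β) (hαi : (cyc u α).Infinite) (hβi : (cyc u β).Infinite) :
    EquivCycleDecomp u (⇑(Equiv.swap α β) ∘ u) := by
  classical
  set u' := ⇑(Equiv.swap α β) ∘ u with hu'def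
  have hbo : β ∉ cyc u α := fun h => hne (cyc_eq_of_mem h).symm
  have hao : α ∉ cyc u β := fun h => hne (cyc_eq_of_mem h)
  have hαnp : ∀ k, 0 < k → u^[k] α ≠ α := nonperiodic_of_infinite hinj hαi
  have hβnp : ∀ k, 0 < k → u^[k] β ≠ β := nonperiodic_of_infinite hinj hβi
  have horbα : ∀ k, u'^[k] α = u^[k] α := by
    apply iterate_agree_all
    intro k
    show Equiv.swap α β (u (u^[k] α)) = u^[k + 1] α
    rw [← Function.iterate_succ_apply' u k α, show k.succ = k + 1 from rfl]
    refine Equiv.swap_apply_of_ne_of_ne (hαnp (k + 1) (by omega)) fun h => hbo ?_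
    rw [← h]
    exact iterate_mem_cyc u α (k + 1)
  have horbβ : ∀ k, u'^[k] β = u^[k] β := by
    apply iterate_agree_all
    intro k
    show Equiv.swap α β (u (u^[k] β)) = u^[k + 1] β
    rw [← Function.iterate_succ_apply' u k β, show k.succ = k + 1 from rfl]
    refine Equiv.swap_apply_of_ne_of_ne (fun h => hao ?_) (hβnp (k + 1) (by omega))
    rw [← h]
    exact iterate_mem_cyc u β (k + 1)
  have hS1inf : (cyc u' α).Infinite := by
    apply Set.infinite_of_injective_forall_mem (orbit_injective hinj hαnp)
    intro k
    show u^[k] α ∈ cyc u' α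
    rw [← horbα k]
    exact iterate_mem_cyc u' α k
  have hS2inf : (cyc u' β).Infinite := by
    apply Set.infinite_of_injective_forall_mem (orbit_injective hinj hβnp)
    intro k
    show u^[k] β ∈ cyc u' β
    rw [← horbβ k]
    exact iterate_mem_cyc u' β k
  have hne' : cyc u' α ≠ cyc u' β := by
    intro heq
    have hβmem : β ∈ cyc u' α := by rw [heq]; exact mem_cyc_self u' β
    obtain ⟨m, k, hmk⟩ := hβmem
    rw [horbα, horbβ] at hmk
    have h1 : u^[m] α ∈ cyc u α := iterate_mem_cyc u α m
    rw [hmk] at h1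
    exact hne ((cyc_eq_of_mem h1).symm.trans (cyc_eq_of_mem (iterate_mem_cyc u β k)))
  have hrange : Set.range u' = Set.range u := range_swap_comp hαr hβr
  have hdiff1 : cyc u' β \ Set.range u' = cyc u α \ Set.range u :=
    diff_lemma hinj hαr hβr hbo hao hαi hβi hne'
  have hdiff2 : cyc u' α \ Set.range u' = cyc u β \ Set.range u := by
    have h2 := diff_lemma hinj hβr hαr hao hbo hβi hαi
      (by rw [Equiv.swap_comm β α]; exact hne'.symm)
    rwa [Equiv.swap_comm β α] at h2
  have hsh : ∀ s : Set Ω, IsCycleUnder u s → s ≠ cyc u α → s ≠ cyc u β → α ∉ s ∧ β ∉ s := by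
    intro s hs h1 h2
    exact ⟨fun hαs => h1 (isCycle_eq_cyc hs hαs), fun hβs => h2 (isCycle_eq_cyc hs hβs)⟩
  have hsh' : ∀ s : Set Ω, IsCycleUnder u' s → s ≠ cyc u' α → s ≠ cyc u' β → α ∉ s ∧ β ∉ s := by
    intro s hs h1 h2
    exact ⟨fun hαs => h1 (isCycle_eq_cyc hs hαs), fun hβs => h2 (isCycle_eq_cyc hs hβs)⟩
  refine ⟨⟨fun s => if h1 : s.1 = cyc u α then ⟨cyc u' β, cyc_isCycle u' β⟩
      else if h2 : s.1 = cyc u β then ⟨cyc u' α, cyc_isCycle u' α⟩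
      else ⟨s.1, isCycle_swap_comp (hsh s.1 s.2 h1 h2).1 (hsh s.1 s.2 h1 h2).2 s.2⟩,
    fun t => if k1 : t.1 = cyc u' β then ⟨cyc u α, cyc_isCycle u α⟩
      else if k2 : t.1 = cyc u' α then ⟨cyc u β, cyc_isCycle u β⟩
      else ⟨t.1, (isCycle_swap_comp_iff (hsh' t.1 t.2 k2 k1).1 (hsh' t.1 t.2 k2 k1).2).mpr t.2⟩,
    ?_, ?_⟩, ?_⟩
  · intro s
    apply Subtype.ext
    by_cases h1 : s.1 = cyc u α
    · simp only [dif_pos h1, dif_pos]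
      exact h1.symm
    by_cases h2 : s.1 = cyc u β
    · simp only [dif_neg h1, dif_pos h2, dif_neg hne', dif_pos]
      exact h2.symm
    · have hk1 : s.1 ≠ cyc u' β := fun hh =>
        (hsh s.1 s.2 h1 h2).2 (by rw [hh]; exact mem_cyc_self u' β)
      have hk2 : s.1 ≠ cyc u' α := fun hh =>
        (hsh s.1 s.2 h1 h2).1 (by rw [hh]; exact mem_cyc_self u' α)
      simp only [dif_neg h1, dif_neg h2, dif_neg hk1, dif_neg hk2]
  · intro t
    apply Subtype.ext
    by_cases k1 : t.1 = cyc u' β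
    · simp only [dif_pos k1, dif_pos]
      exact k1.symm
    by_cases k2 : t.1 = cyc u' α
    · simp only [dif_neg k1, dif_pos k2, dif_neg (Ne.symm hne), dif_pos]
      exact k2.symm
    · have hh1 : t.1 ≠ cyc u α := fun hh =>
        (hsh' t.1 t.2 k2 k1).1 (by rw [hh]; exact mem_cyc_self u α)
      have hh2 : t.1 ≠ cyc u β := fun hh =>
        (hsh' t.1 t.2 k2 k1).2 (by rw [hh]; exact mem_cyc_self u β)
      simp only [dif_neg k1, dif_neg k2, dif_neg hh1, dif_neg hh2]
  · intro s
    by_cases h1 : s.1 = cyc u α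
    · simp only [Equiv.coe_fn_mk, dif_pos h1]
      constructor
      · rw [h1, mk_eq_aleph0 hαi, mk_eq_aleph0 hS2inf]
      · rw [h1]
        constructor
        · rintro ⟨_, _, h3⟩
          exact ⟨cyc_isCycle u' β, hS2inf, by rw [hdiff1]; exact h3⟩
        · rintro ⟨_, _, h3⟩
          rw [hdiff1] at h3
          exact ⟨cyc_isCycle u α, hαi, h3⟩
    by_cases h2 : s.1 = cyc u β
    · simp only [Equiv.coe_fn_mk, dif_neg h1, dif_pos h2]
      constructor
      · rw [h2, mk_eq_aleph0 hβi, mk_eq_aleph0 hS1inf]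
      · rw [h2]
        constructor
        · rintro ⟨_, _, h3⟩
          exact ⟨cyc_isCycle u' α, hS1inf, by rw [hdiff2]; exact h3⟩
        · rintro ⟨_, _, h3⟩
          rw [hdiff2] at h3
          exact ⟨cyc_isCycle u β, hβi, h3⟩
    · simp only [Equiv.coe_fn_mk, dif_neg h1, dif_neg h2]
      refine ⟨by trivial, ?_⟩
      constructor
      · rintro ⟨_, hinf, h3⟩
        exact ⟨isCycle_swap_comp (hsh s.1 s.2 h1 h2).1 (hsh s.1 s.2 h1 h2).2 s.2, hinf,
          by rwa [hrange]⟩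
      · rintro ⟨_, hinf, h3⟩
        rw [hrange] at h3
        exact ⟨s.2, hinf, h3⟩

theorem mk_congr_set {s t : Set Ω} (h : s = t) : Cardinal.mk ↥s = Cardinal.mk ↥t := by rw [h]

theorem cycles_countable [Countable Ω] {v : Ω → Ω} {M : Set (Set Ω)}
    (hM : ∀ s ∈ M, IsCycleUnder v s) : Cardinal.mk ↥M ≤ Cardinal.aleph0 := by
  have hinj : Function.Injective (fun s : ↥M => ((hM s.1 s.2).1).some) := by
    intro s t hst
    have h1 : ((hM s.1 s.2).1).some ∈ s.1 := Set.Nonempty.some_mem _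
    have hst' : ((hM s.1 s.2).1).some = ((hM t.1 t.2).1).some := hst
    have h2 : ((hM s.1 s.2).1).some ∈ t.1 := by rw [hst']; exact Set.Nonempty.some_mem _
    exact Subtype.ext (cycle_eq_cycle (hM s.1 s.2) (hM t.1 t.2) h1 h2)
  calc Cardinal.mk ↥M ≤ Cardinal.mk Ω := Cardinal.mk_le_of_injective hinj
    _ ≤ Cardinal.aleph0 := Cardinal.mk_le_aleph0

theorem S2 [Countable Ω] [Infinite Ω] [DecidableEq Ω] {u : Ω → Ω}
    (hinj : Function.Injective u) {α : Ω} {n : ℕ} (hn : 0 < n)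
    (hαr : α ∈ Set.range u) (hαi : (cyc u α).Infinite)
    (hN : {s : Set Ω | IsCycleUnder u s ∧ Cardinal.mk ↥s = (n : Cardinal)}.Infinite) :
    EquivCycleDecomp u (⇑(Equiv.swap α (u^[n] α)) ∘ u) := by
  classical
  set β := u^[n] α with hβdef
  set u' := ⇑(Equiv.swap α β) ∘ u with hu'def
  have hu'inj : Function.Injective u' := (Equiv.injective _).comp hinj
  have hαnp : ∀ k, 0 < k → u^[k] α ≠ α := nonperiodic_of_infinite hinj hαi
  have horbinj : Function.Injective fun k : ℕ => u^[k] α := orbit_injective hinj hαnp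
  have hβcyc : β ∈ cyc u α := iterate_mem_cyc u α n
  have hβr : β ∈ Set.range u := ⟨u^[n - 1] α, by
    rw [← Function.iterate_succ_apply' u (n - 1) α, show (n - 1).succ = n from by omega, hβdef]⟩
  have hcycβ : cyc u β = cyc u α := cyc_eq_of_mem hβcyc
  have hrange : Set.range u' = Set.range u := range_swap_comp hαr hβr
  have hagree : ∀ k ≤ n - 1, u'^[k] α = u^[k] α := by
    apply iterate_agree
    intro k hk
    show Equiv.swap α β (u (u^[k] α)) = u^[k + 1] α
    rw [← Function.iterate_succ_apply' u k α, show k.succ = k + 1 from rfl]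
    refine Equiv.swap_apply_of_ne_of_ne (hαnp (k + 1) (by omega)) ?_
    intro h
    rw [hβdef] at h
    have := horbinj h
    omega
  have hper : u'^[n] α = α := by
    rw [show n = (n - 1) + 1 from by omega, Function.iterate_succ_apply',
      hagree (n - 1) le_rfl]
    show Equiv.swap α β (u (u^[n - 1] α)) = α
    rw [← Function.iterate_succ_apply' u (n - 1) α, show (n - 1).succ = n from by omega, ← hβdef]
    exact Equiv.swap_apply_right α β
  have hC : cyc u' α = Set.range (fun i : Fin n => u'^[(i : ℕ)] α) :=
    cyc_eq_range_fin_of_periodic hu'inj hn hper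
  have hmkC : Cardinal.mk ↥(cyc u' α) = (n : Cardinal) := by
    have hCeq : (fun i : Fin n => u'^[(i : ℕ)] α) = fun i : Fin n => u^[(i : ℕ)] α := by
      funext i
      exact hagree i (by omega)
    have hfininj : Function.Injective fun i : Fin n => u^[(i : ℕ)] α := by
      intro i j hij
      apply Fin.ext
      exact horbinj (show (fun k : ℕ => u^[k] α) (i : ℕ) = (fun k : ℕ => u^[k] α) (j : ℕ) from hij)
    have : Fintype ↥(Set.range fun i : Fin n => u^[(i : ℕ)] α) := Set.fintypeRange _
    rw [hC, hCeq, Cardinal.mk_fintype, Set.card_range_of_injective hfininj, Fintype.card_fin]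
  have hCfin : (cyc u' α).Finite :=
    Cardinal.lt_aleph0_iff_set_finite.mp (by rw [hmkC]; exact Cardinal.nat_lt_aleph0 n)
  have he1 : ∀ j, u^[j] β = u^[j + n] α := by
    intro j
    rw [hβdef, ← Function.iterate_add_apply]
  have hβnp : ∀ k, 0 < k → u^[k] β ≠ β := by
    intro k hk h
    rw [he1 k, hβdef] at h
    have := horbinj h
    omega
  have horbβ : ∀ k, u'^[k] β = u^[k] β := by
    apply iterate_agree_all
    intro k
    show Equiv.swap α β (u (u^[k] β)) = u^[k + 1] β
    rw [← Function.iterate_succ_apply' u k β, show k.succ = k + 1 from rfl]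
    refine Equiv.swap_apply_of_ne_of_ne ?_ (hβnp (k + 1) (by omega))
    intro h
    rw [he1 (k + 1)] at h
    exact hαnp (k + 1 + n) (by omega) h
  have hDinf : (cyc u' β).Infinite := by
    apply Set.infinite_of_injective_forall_mem (orbit_injective hinj hβnp)
    intro k
    show u^[k] β ∈ cyc u' β
    rw [← horbβ k]
    exact iterate_mem_cyc u' β k
  have hCneD : cyc u' α ≠ cyc u' β := fun h => hDinf (h ▸ hCfin)
  have hdiffD : cyc u' β \ Set.range u' = cyc u α \ Set.range u := by
    ext p
    simp only [Set.mem_diff, hrange]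
    constructor
    · rintro ⟨hp, hpr⟩
      refine ⟨?_, hpr⟩
      by_cases hα_in : α ∈ cyc u p
      · rw [cyc_eq_of_mem hα_in]
        exact mem_cyc_self u p
      by_cases hβ_in : β ∈ cyc u p
      · exfalso
        apply hα_in
        rw [← cyc_eq_of_mem hβ_in, hcycβ]
        exact mem_cyc_self u α
      · exfalso
        have hcyc' : IsCycleUnder u' (cyc u p) := isCycle_swap_comp hα_in hβ_in (cyc_isCycle u p)
        have heq : cyc u p = cyc u' β :=
          cycle_eq_cycle hcyc' (cyc_isCycle u' β) (mem_cyc_self u p) hp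
        apply hβ_in
        rw [heq]
        exact mem_cyc_self u' β
    · rintro ⟨hp, hpr⟩
      refine ⟨incl_lemma hinj hαr hp hpr hαi ?_, hpr⟩
      intro j hj
      have hcycp : cyc u p = cyc u α := cyc_eq_of_mem hp
      have hporb := cyc_eq_orbit_of_not_mem_range hinj hpr
      have hαorb : α ∈ Set.range fun k : ℕ => u^[k] p := by
        rw [← hporb, hcycp]
        exact mem_cyc_self u α
      obtain ⟨m, hm⟩ := hαorb
      have hm' : u^[m] p = α := hm
      refine ⟨m, ?_, hm'⟩
      have hpinf : (cyc u p).Infinite := by rwa [hcycp]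
      have hpnp : ∀ k, 0 < k → u^[k] p ≠ p := nonperiodic_of_infinite hinj hpinf
      have hpinj : Function.Injective fun k : ℕ => u^[k] p := orbit_injective hinj hpnp
      have hjnm : u^[j] p = u^[n + m] p := by
        rw [hj, hβdef, Function.iterate_add_apply, hm']
      have : j = n + m := hpinj hjnm
      omega
  set N := {s : Set Ω | IsCycleUnder u s ∧ Cardinal.mk ↥s = (n : Cardinal)} with hNdef
  set N' := {s : Set Ω | IsCycleUnder u' s ∧ Cardinal.mk ↥s = (n : Cardinal)} with hN'def
  have hnat_ne : (n : Cardinal) ≠ Cardinal.aleph0 := (Cardinal.nat_lt_aleph0 n).ne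
  have hmemN : ∀ s ∈ N, α ∉ s ∧ β ∉ s := by
    intro s hs
    constructor
    · intro hαs
      apply hnat_ne
      rw [← hs.2, isCycle_eq_cyc hs.1 hαs]
      exact mk_eq_aleph0 hαi
    · intro hβs
      apply hnat_ne
      rw [← hs.2, isCycle_eq_cyc hs.1 hβs]
      rw [hcycβ]
      exact mk_eq_aleph0 hαi
  have hNsubN' : N ⊆ N' := fun s hs =>
    ⟨isCycle_swap_comp (hmemN s hs).1 (hmemN s hs).2 hs.1, hs.2⟩
  have hmemN' : ∀ t ∈ N', t ≠ cyc u' α → α ∉ t ∧ β ∉ t := by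
    intro t ht htC
    constructor
    · intro hαt
      exact htC (isCycle_eq_cyc ht.1 hαt)
    · intro hβt
      apply hnat_ne
      rw [← ht.2, isCycle_eq_cyc ht.1 hβt]
      exact mk_eq_aleph0 hDinf
  have hN'subN : ∀ t ∈ N', t ≠ cyc u' α → t ∈ N := by
    intro t ht htC
    exact ⟨(isCycle_swap_comp_iff (hmemN' t ht htC).1 (hmemN' t ht htC).2).mpr ht.1, ht.2⟩
  have hmkN : Cardinal.mk ↥N = Cardinal.aleph0 := by
    refine le_antisymm (cycles_countable fun s hs => hs.1) ?_
    have : Infinite ↥N := Set.infinite_coe_iff.mpr hN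
    exact Cardinal.aleph0_le_mk ↥N
  have hN'inf : N'.Infinite := hN.mono hNsubN'
  have hmkN' : Cardinal.mk ↥N' = Cardinal.aleph0 := by
    refine le_antisymm (cycles_countable fun s hs => hs.1) ?_
    have : Infinite ↥N' := Set.infinite_coe_iff.mpr hN'inf
    exact Cardinal.aleph0_le_mk ↥N'
  obtain ⟨φ⟩ : Nonempty (↥N ≃ ↥N') := Cardinal.eq.mp (hmkN.trans hmkN'.symm)
  have hshared : ∀ s : Set Ω, IsCycleUnder u s → s ≠ cyc u α →
      Cardinal.mk ↥s ≠ (n : Cardinal) → α ∉ s ∧ β ∉ s := by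
    intro s hs h1 _
    constructor
    · intro hαs
      exact h1 (isCycle_eq_cyc hs hαs)
    · intro hβs
      apply h1
      rw [isCycle_eq_cyc hs hβs, hcycβ]
  have hshared' : ∀ t : Set Ω, IsCycleUnder u' t → t ≠ cyc u' β →
      Cardinal.mk ↥t ≠ (n : Cardinal) → α ∉ t ∧ β ∉ t := by
    intro t ht k1 k2
    constructor
    · intro hαt
      apply k2
      rw [isCycle_eq_cyc ht hαt]
      exact hmkC
    · intro hβt
      exact k1 (isCycle_eq_cyc ht hβt)
  have hmkD : Cardinal.mk ↥(cyc u' β) = Cardinal.aleph0 := mk_eq_aleph0 hDinf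
  have hmkS : Cardinal.mk ↥(cyc u α) = Cardinal.aleph0 := mk_eq_aleph0 hαi
  refine ⟨⟨fun s => if h1 : s.1 = cyc u α then ⟨cyc u' β, cyc_isCycle u' β⟩
      else if h2 : Cardinal.mk ↥s.1 = (n : Cardinal) then
        ⟨(φ ⟨s.1, s.2, h2⟩).1, (φ ⟨s.1, s.2, h2⟩).2.1⟩
      else ⟨s.1, isCycle_swap_comp (hshared s.1 s.2 h1 h2).1 (hshared s.1 s.2 h1 h2).2 s.2⟩,
    fun t => if k1 : t.1 = cyc u' β then ⟨cyc u α, cyc_isCycle u α⟩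
      else if k2 : Cardinal.mk ↥t.1 = (n : Cardinal) then
        ⟨(φ.symm ⟨t.1, t.2, k2⟩).1, (φ.symm ⟨t.1, t.2, k2⟩).2.1⟩
      else ⟨t.1, (isCycle_swap_comp_iff (hshared' t.1 t.2 k1 k2).1
        (hshared' t.1 t.2 k1 k2).2).mpr t.2⟩,
    ?_, ?_⟩, ?_⟩
  · intro s
    apply Subtype.ext
    by_cases h1 : s.1 = cyc u α
    · simp only [dif_pos h1, dif_pos]
      exact h1.symm
    by_cases h2 : Cardinal.mk ↥s.1 = (n : Cardinal)
    · simp only [dif_neg h1, dif_pos h2]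
      have hx := φ ⟨s.1, s.2, h2⟩
      have hk1 : (φ ⟨s.1, s.2, h2⟩).1 ≠ cyc u' β := by
        intro hh
        exact hnat_ne ((φ ⟨s.1, s.2, h2⟩).2.2.symm.trans ((mk_congr_set hh).trans hmkD))
      rw [dif_neg hk1, dif_pos (φ ⟨s.1, s.2, h2⟩).2.2]
      have hmem : (⟨(φ ⟨s.1, s.2, h2⟩).1, ⟨(φ ⟨s.1, s.2, h2⟩).2.1, (φ ⟨s.1, s.2, h2⟩).2.2⟩⟩
          : ↥N') = φ ⟨s.1, s.2, h2⟩ := Subtype.ext rfl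
      have hfin : φ.symm (⟨(φ ⟨s.1, s.2, h2⟩).1, ⟨(φ ⟨s.1, s.2, h2⟩).2.1,
          (φ ⟨s.1, s.2, h2⟩).2.2⟩⟩ : ↥N') = ⟨s.1, s.2, h2⟩ := by
        rw [hmem]
        exact Equiv.symm_apply_apply φ _
      simp only [hfin]
    · have hk1 : s.1 ≠ cyc u' β := fun hh =>
        (hshared s.1 s.2 h1 h2).2 (by rw [hh]; exact mem_cyc_self u' β)
      simp only [dif_neg h1, dif_neg h2, dif_neg hk1]
  · intro t
    apply Subtype.ext
    by_cases k1 : t.1 = cyc u' β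
    · simp only [dif_pos k1, dif_pos]
      exact k1.symm
    by_cases k2 : Cardinal.mk ↥t.1 = (n : Cardinal)
    · simp only [dif_neg k1, dif_pos k2]
      have hh1 : (φ.symm ⟨t.1, t.2, k2⟩).1 ≠ cyc u α := by
        intro hh
        exact hnat_ne ((φ.symm ⟨t.1, t.2, k2⟩).2.2.symm.trans ((mk_congr_set hh).trans hmkS))
      rw [dif_neg hh1, dif_pos (φ.symm ⟨t.1, t.2, k2⟩).2.2]
      have hmem : (⟨(φ.symm ⟨t.1, t.2, k2⟩).1, ⟨(φ.symm ⟨t.1, t.2, k2⟩).2.1,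
          (φ.symm ⟨t.1, t.2, k2⟩).2.2⟩⟩ : ↥N) = φ.symm ⟨t.1, t.2, k2⟩ := Subtype.ext rfl
      have hfin : φ (⟨(φ.symm ⟨t.1, t.2, k2⟩).1, ⟨(φ.symm ⟨t.1, t.2, k2⟩).2.1,
          (φ.symm ⟨t.1, t.2, k2⟩).2.2⟩⟩ : ↥N) = ⟨t.1, t.2, k2⟩ := by
        rw [hmem]
        exact Equiv.apply_symm_apply φ _
      simp only [hfin]
    · have hh1 : t.1 ≠ cyc u α := by
        intro hh
        apply k2
        have hαt : α ∈ t.1 := by rw [hh]; exact mem_cyc_self u α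
        rw [isCycle_eq_cyc t.2 hαt]
        exact hmkC
      simp only [dif_neg k1, dif_neg k2, dif_neg hh1]
  · intro s
    by_cases h1 : s.1 = cyc u α
    · simp only [Equiv.coe_fn_mk, dif_pos h1]
      constructor
      · rw [h1, hmkS, hmkD]
      · rw [h1]
        constructor
        · rintro ⟨_, _, h3⟩
          exact ⟨cyc_isCycle u' β, hDinf, by rw [hdiffD]; exact h3⟩
        · rintro ⟨_, _, h3⟩
          rw [hdiffD] at h3
          exact ⟨cyc_isCycle u α, hαi, h3⟩
    by_cases h2 : Cardinal.mk ↥s.1 = (n : Cardinal)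
    · simp only [Equiv.coe_fn_mk, dif_neg h1, dif_pos h2]
      have hfin_s : s.1.Finite := Cardinal.lt_aleph0_iff_set_finite.mp
        (by rw [h2]; exact Cardinal.nat_lt_aleph0 n)
      have hfin_t : (φ ⟨s.1, s.2, h2⟩).1.Finite := Cardinal.lt_aleph0_iff_set_finite.mp
        (by rw [(φ ⟨s.1, s.2, h2⟩).2.2]; exact Cardinal.nat_lt_aleph0 n)
      constructor
      · exact h2.trans (φ ⟨s.1, s.2, h2⟩).2.2.symm
      · constructor
        · rintro ⟨_, h3, _⟩
          exact absurd hfin_s h3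
        · rintro ⟨_, h3, _⟩
          exact absurd hfin_t h3
    · simp only [Equiv.coe_fn_mk, dif_neg h1, dif_neg h2]
      refine ⟨by trivial, ?_⟩
      constructor
      · rintro ⟨_, hinf, h3⟩
        exact ⟨isCycle_swap_comp (hshared s.1 s.2 h1 h2).1 (hshared s.1 s.2 h1 h2).2 s.2, hinf,
          by rwa [hrange]⟩
      · rintro ⟨_, hinf, h3⟩
        rw [hrange] at h3
        exact ⟨s.2, hinf, h3⟩

-- ## decomposition of finitary permutations into transpositions

theorem swap_isTransposition [DecidableEq Ω] {x y : Ω} (hxy : x ≠ y) :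
    IsTransposition (Equiv.swap x y) :=
  ⟨x, y, hxy, Equiv.swap_apply_left x y, Equiv.swap_apply_right x y,
    fun z hzx hzy => Equiv.swap_apply_of_ne_of_ne hzx hzy⟩

theorem perm_decomp_aux [DecidableEq Ω] :
    ∀ (n : ℕ) (h : Equiv.Perm Ω) (hfin : {x | h x ≠ x}.Finite), hfin.toFinset.card ≤ n →
    ∃ l : List (Equiv.Perm Ω), (∀ τ ∈ l, IsTransposition τ) ∧ l.prod = h := by
  intro n
  induction n with
  | zero =>
    intro h hfin hcard
    have h1 : h = 1 := by
      ext x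
      by_contra hx
      have : x ∈ hfin.toFinset := by
        rw [Set.Finite.mem_toFinset]
        exact hx
      have := Finset.card_pos.mpr ⟨x, this⟩
      omega
    exact ⟨[], by simp, by simp [h1]⟩
  | succ n ih =>
    intro h hfin hcard
    by_cases h1 : h = 1
    · exact ⟨[], by simp, by simp [h1]⟩
    · have hx : ∃ x, h x ≠ x := by
        by_contra hc
        push_neg at hc
        exact h1 (Equiv.ext hc)
      obtain ⟨x, hx⟩ := hx
      set τ := Equiv.swap x (h x) with hτdef
      set h' := τ * h with hh'def
      have hsupp : {y | h' y ≠ y} ⊆ {y | h y ≠ y} \ {x} := by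
        intro y hy
        simp only [Set.mem_setOf_eq, hh'def, Equiv.Perm.mul_apply] at hy
        constructor
        · show h y ≠ y
          intro hyy
          apply hy
          show Equiv.swap x (h x) (h y) = y
          rw [hyy]
          by_cases h2 : y = x
          · exfalso
            rw [h2] at hyy
            exact hx hyy
          by_cases h3 : y = h x
          · exfalso
            rw [h3] at hyy
            exact hx (h.injective hyy)
          · exact Equiv.swap_apply_of_ne_of_ne h2 h3
        · intro h2
          simp only [Set.mem_singleton_iff] at h2
          apply hy
          show Equiv.swap x (h x) (h y) = y
          rw [h2]
          exact Equiv.swap_apply_right x (h x)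
      have hfin' : {y | h' y ≠ y}.Finite := (hfin.diff).subset hsupp
      have hxmem : x ∈ hfin.toFinset := by
        rw [Set.Finite.mem_toFinset]
        exact hx
      have hcard' : hfin'.toFinset.card ≤ n := by
        have hsub : hfin'.toFinset ⊆ hfin.toFinset.erase x := by
          intro y hy
          rw [Set.Finite.mem_toFinset] at hy
          have := hsupp hy
          rw [Finset.mem_erase, Set.Finite.mem_toFinset]
          exact ⟨by simpa using this.2, this.1⟩
        have := Finset.card_le_card hsub
        rw [Finset.card_erase_of_mem hxmem] at this
        omega
      obtain ⟨l, hl, hlprod⟩ := ih h' hfin' hcard'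
      refine ⟨τ :: l, ?_, ?_⟩
      · intro σ hσ
        rcases List.mem_cons.mp hσ with h2 | h2
        · subst h2
          exact swap_isTransposition (Ne.symm hx)
        · exact hl σ h2
      · rw [List.prod_cons, hlprod, hh'def, ← mul_assoc, hτdef, Equiv.swap_mul_self, one_mul]

theorem perm_decomp [DecidableEq Ω] (h : Equiv.Perm Ω) (hfin : {x | h x ≠ x}.Finite) :
    ∃ l : List (Equiv.Perm Ω), (∀ τ ∈ l, IsTransposition τ) ∧ l.prod = h :=
  perm_decomp_aux hfin.toFinset.card h hfin le_rfl

-- ## cycles fixed pointwise by a finitary permutation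

theorem isCycle_of_fixed {f : Ω → Ω} (h : Equiv.Perm Ω) {s : Set Ω}
    (hfix : ∀ y ∈ s, h y = y) (hs : IsCycleUnder f s) : IsCycleUnder (⇑h ∘ f) s := by
  obtain ⟨hne, hcl, hmin⟩ := hs
  have key : ∀ t ⊆ s, ∀ x, (h (f x) ∈ t ↔ f x ∈ t) := by
    intro t hts x
    constructor
    · intro hmem
      have h1 : h (f x) ∈ s := hts hmem
      have h2 : h (h (f x)) = h (f x) := hfix _ h1
      have h3 : h (f x) = f x := h.injective h2
      rwa [h3] at hmem
    · intro hmem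
      rwa [hfix _ (hts hmem)]
  refine ⟨hne, fun γ => ?_, fun t hts htne htcl => ?_⟩
  · show h (f γ) ∈ s ↔ γ ∈ s
    rw [key s Set.Subset.rfl γ, hcl]
  · refine hmin t hts htne fun γ => ?_
    rw [← key t hts γ]
    exact htcl γ

theorem two_infinite_cycles {f : Ω → Ω} (hc : 2 ≤ Copen f + Cfwd f) :
    ∃ s t : Set Ω, IsCycleUnder f s ∧ s.Infinite ∧ IsCycleUnder f t ∧ t.Infinite ∧ s ≠ t := by
  rw [Copen, Cfwd, Cardinal.add_def] at hc
  obtain ⟨x, y, hxy⟩ := Cardinal.two_le_iff.mp hc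
  rcases x with s | s <;> rcases y with t | t
  · exact ⟨s.1, t.1, s.2.1, s.2.2.1, t.2.1, t.2.2.1,
      fun hh => hxy (congrArg Sum.inl (Subtype.ext hh))⟩
  · exact ⟨s.1, t.1, s.2.1, s.2.2.1, t.2.1, t.2.2.1,
      fun hh => s.2.2.2 (hh ▸ t.2.2.2)⟩
  · exact ⟨s.1, t.1, s.2.1, s.2.2.1, t.2.1, t.2.2.1,
      fun hh => t.2.2.2 (hh ▸ s.2.2.2)⟩
  · exact ⟨s.1, t.1, s.2.1, s.2.2.1, t.2.1, t.2.2.1,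
      fun hh => hxy (congrArg Sum.inr (Subtype.ext hh))⟩

theorem one_infinite_cycle {f : Ω → Ω} (hc : 1 ≤ Copen f + Cfwd f) :
    ∃ s : Set Ω, IsCycleUnder f s ∧ s.Infinite := by
  rw [Copen, Cfwd, Cardinal.add_def] at hc
  have hne : Nonempty ({s : Set Ω // IsOpenCycle f s} ⊕ {s : Set Ω // IsForwardCycle f s}) := by
    rw [← Cardinal.mk_ne_zero_iff]
    intro hh
    rw [hh] at hc
    exact (Cardinal.one_le_iff_ne_zero.mp hc) rfl
  obtain ⟨x⟩ := hne
  rcases x with s | s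
  · exact ⟨s.1, s.2.1, s.2.2.1⟩
  · exact ⟨s.1, s.2.1, s.2.2.1⟩

end StmtAux

open StmtAux

theorem stmt_15 [Countable Ω] [Infinite Ω] (h : Equiv.Perm Ω) (hfin : Finitary h)
    (f : Ω → Ω) (hf : Function.Injective f)
    (hcond : 2 ≤ Copen f + Cfwd f ∨
      (1 ≤ Copen f + Cfwd f ∧ ∃ n : ℕ, 0 < n ∧ Cn f n = ℵ₀)) :
    ∃ g : Equiv.Perm Ω, IsAlt g ∧
      EquivCycleDecomp (⇑h ∘ f) (⇑g ∘ f) ∧ EquivCycleDecomp (f ∘ ⇑h) (f ∘ ⇑g) := by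
  classical
  have hfin' : {x | h x ≠ x}.Finite := hfin
  obtain ⟨l, hl, hlprod⟩ := perm_decomp h hfin'
  by_cases hpar : Even l.length
  · exact ⟨h, ⟨l, hl, hlprod, hpar⟩, ecd_refl _, ecd_refl _⟩
  · set u : Ω → Ω := ⇑h ∘ f with hudef
    have hu : Function.Injective u := h.injective.comp hf
    have havoid : ∀ x : Ω, (cyc f x).Infinite → ∃ p ∈ cyc f x,
        (cyc u p).Infinite ∧ ∀ k, u^[k] p = f^[k] p := by
      intro x hx
      obtain ⟨p, hp, hav⟩ := exists_avoid_finset hf hx hfin'.toFinset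
      have horb : ∀ k, u^[k] p = f^[k] p := by
        apply iterate_agree_all
        intro k
        show h (f (f^[k] p)) = f^[k + 1] p
        have hmem : f^[k + 1] p ∉ hfin'.toFinset := hav (k + 1)
        rw [Set.Finite.mem_toFinset] at hmem
        simp only [Set.mem_setOf_eq, not_not] at hmem
        rw [← Function.iterate_succ_apply' f k p, show k.succ = k + 1 from rfl]
        exact hmem
      have hpinf : (cyc f p).Infinite := by rw [cyc_eq_of_mem hp]; exact hx
      have hnp : ∀ k, 0 < k → f^[k] p ≠ p := nonperiodic_of_infinite hf hpinf
      have hcyc_u_inf : (cyc u p).Infinite := by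
        apply Set.infinite_of_injective_forall_mem (orbit_injective hf hnp)
        intro k
        show f^[k] p ∈ cyc u p
        rw [← horb k]
        exact iterate_mem_cyc u p k
      exact ⟨p, hp, hcyc_u_inf, horb⟩
    have hcycup : ∀ p : Ω, cyc u (u p) = cyc u p := by
      intro p
      exact cyc_eq_of_mem ⟨1, 0, by simp⟩
    have main : ∃ α β : Ω, α ≠ β ∧ EquivCycleDecomp u (⇑(Equiv.swap α β) ∘ u) := by
      rcases hcond with hc1 | ⟨hc2, n, hn, hCn⟩
      · obtain ⟨s, t, hscyc, hsinf, htcyc, htinf, hst⟩ := two_infinite_cycles hc1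
        obtain ⟨x, hxs⟩ := hscyc.1
        obtain ⟨y, hyt⟩ := htcyc.1
        have hsx : s = cyc f x := isCycle_eq_cyc hscyc hxs
        have hty : t = cyc f y := isCycle_eq_cyc htcyc hyt
        obtain ⟨p, hp, hpuinf, hporb⟩ := havoid x (hsx ▸ hsinf)
        obtain ⟨q, hq, hquinf, hqorb⟩ := havoid y (hty ▸ htinf)
        have hcyc_ne : cyc u p ≠ cyc u q := by
          intro heq
          have hmem : q ∈ cyc u p := by rw [heq]; exact mem_cyc_self u q
          obtain ⟨m, k, hmk⟩ := hmem
          rw [hporb m, hqorb k] at hmk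
          have h1 : f^[m] p ∈ cyc f x := by
            rw [← cyc_eq_of_mem hp]
            exact iterate_mem_cyc f p m
          have h2 : f^[m] p ∈ cyc f y := by
            rw [hmk, ← cyc_eq_of_mem hq]
            exact iterate_mem_cyc f q k
          apply hst
          rw [hsx, hty]
          exact cycle_eq_cycle (cyc_isCycle f x) (cyc_isCycle f y) h1 h2
        refine ⟨u p, u q, ?_, ?_⟩
        · intro hh
          exact hcyc_ne (by rw [hu hh])
        · have h1 : cyc u (u p) ≠ cyc u (u q) := by
            rw [hcycup p, hcycup q]
            exact hcyc_ne
          have h2 : (cyc u (u p)).Infinite := by rw [hcycup p]; exact hpuinf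
          have h3 : (cyc u (u q)).Infinite := by rw [hcycup q]; exact hquinf
          exact S1 hu ⟨p, rfl⟩ ⟨q, rfl⟩ h1 h2 h3
      · obtain ⟨s, hscyc, hsinf⟩ := one_infinite_cycle hc2
        obtain ⟨x, hxs⟩ := hscyc.1
        have hsx : s = cyc f x := isCycle_eq_cyc hscyc hxs
        obtain ⟨p, hp, hpuinf, hporb⟩ := havoid x (hsx ▸ hsinf)
        have hNf : {s : Set Ω | IsCycleUnder f s ∧ Cardinal.mk ↥s = (n : Cardinal)}.Infinite := by
          have h1 : Infinite {s : Set Ω // IsCycleUnder f s ∧ Cardinal.mk ↥s = (n : Cardinal)} :=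
            Cardinal.infinite_iff.mpr (le_of_eq hCn.symm)
          exact Set.infinite_coe_iff.mp h1
        have hbadfin : {s : Set Ω | (IsCycleUnder f s ∧ Cardinal.mk ↥s = (n : Cardinal)) ∧
            ¬(∀ y ∈ s, h y = y)}.Finite := by
          apply Set.Finite.subset (hfin'.image fun y => cyc f y)
          rintro s ⟨⟨hs, _⟩, hbad⟩
          push_neg at hbad
          obtain ⟨y, hy, hhy⟩ := hbad
          exact ⟨y, hhy, (isCycle_eq_cyc hs hy).symm⟩
        have hgood := hNf.diff hbadfin
        have hNu : {s : Set Ω | IsCycleUnder u s ∧ Cardinal.mk ↥s = (n : Cardinal)}.Infinite := by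
          apply Set.Infinite.mono ?_ hgood
          rintro s ⟨⟨hs, hmk⟩, hnb⟩
          have hfix : ∀ y ∈ s, h y = y := by
            by_contra hc
            exact hnb ⟨⟨hs, hmk⟩, hc⟩
          exact ⟨isCycle_of_fixed h hfix hs, hmk⟩
        have h2 : (cyc u (u p)).Infinite := by rw [hcycup p]; exact hpuinf
        have hnper : ∀ k, 0 < k → u^[k] (u p) ≠ u p := nonperiodic_of_infinite hu h2
        refine ⟨u p, u^[n] (u p), ?_, ?_⟩
        · intro hh
          exact hnper n hn hh.symm
        · exact S2 hu hn ⟨p, rfl⟩ h2 hNu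
    obtain ⟨α, β, hαβ, hecd⟩ := main
    set g : Equiv.Perm Ω := Equiv.swap α β * h with hgdef
    have hgf : ⇑g ∘ f = ⇑(Equiv.swap α β) ∘ u := by
      funext z
      simp [hgdef, hudef, Equiv.Perm.mul_apply]
    have hecd1 : EquivCycleDecomp (⇑h ∘ f) (⇑g ∘ f) := by rw [hgf]; exact hecd
    refine ⟨g, ⟨Equiv.swap α β :: l, ?_, ?_, ?_⟩, hecd1, ?_⟩
    · intro σ hσ
      rcases List.mem_cons.mp hσ with h2 | h2
      · subst h2
        exact swap_isTransposition hαβ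
      · exact hl σ h2
    · rw [List.prod_cons, hlprod]
    · simpa [Nat.even_add_one] using hpar
    · have c1 : EquivCycleDecomp (f ∘ ⇑h) (⇑h ∘ (f ∘ ⇑h) ∘ ⇑h.symm) := ecd_conj h (f ∘ ⇑h)
      have e1 : ⇑h ∘ (f ∘ ⇑h) ∘ ⇑h.symm = ⇑h ∘ f := by funext z; simp
      rw [e1] at c1
      have c2 : EquivCycleDecomp (f ∘ ⇑g) (⇑g ∘ (f ∘ ⇑g) ∘ ⇑g.symm) := ecd_conj g (f ∘ ⇑g)
      have e2 : ⇑g ∘ (f ∘ ⇑g) ∘ ⇑g.symm = ⇑g ∘ f := by funext z; simp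
      rw [e2] at c2
      exact ecd_trans c1 (ecd_trans hecd1 (ecd_symm c2))
end

section
/- Let f ∈ Inj(Ω) be a map satisfying (f)C_open + (f)C_fwd = 1 and (f)C_n < ℵ₀ for all n ∈ ℤ₊, and let h ∈ Fin(Ω) be a transposition. Then Σ_{n∈ℤ₊} ((f)C_n − (fh)C_n) = Σ_{n∈ℤ₊} ((f)C_n − (hf)C_n), and this integer is either −1 or 1. -/
open Cardinal Function Set

universe u
variable {Ω : Type u}

namespace CycAux

def R (f : Ω → Ω) (a b : Ω) : Prop := ∃ m n : ℕ, f^[m] a = f^[n] b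

def cls (f : Ω → Ω) (a : Ω) : Set Ω := {b | R f a b}

lemma R_refl (f : Ω → Ω) (a : Ω) : R f a a := ⟨0, 0, rfl⟩

lemma R_symm {f : Ω → Ω} {a b : Ω} (h : R f a b) : R f b a := by
  obtain ⟨m, n, h⟩ := h; exact ⟨n, m, h.symm⟩

lemma R_trans {f : Ω → Ω} {a b c : Ω} (h1 : R f a b) (h2 : R f b c) : R f a c := by
  obtain ⟨m, n, h1⟩ := h1
  obtain ⟨p, q, h2⟩ := h2
  refine ⟨p + m, n + q, ?_⟩
  rw [Function.iterate_add_apply, h1, ← Function.iterate_add_apply, Nat.add_comm p n,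
    Function.iterate_add_apply, h2, ← Function.iterate_add_apply]

lemma mem_cls_self (f : Ω → Ω) (a : Ω) : a ∈ cls f a := R_refl f a

lemma cls_eq_of_R {f : Ω → Ω} {a b : Ω} (h : R f a b) : cls f a = cls f b := by
  ext c
  exact ⟨fun hc => R_trans (R_symm h) hc, fun hc => R_trans h hc⟩

lemma cls_closed (f : Ω → Ω) (a : Ω) : ∀ c, f c ∈ cls f a ↔ c ∈ cls f a := by
  intro c
  constructor
  · rintro ⟨m, n, h⟩
    exact ⟨m, n + 1, h.trans (Function.iterate_succ_apply f n c).symm⟩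
  · rintro ⟨m, n, h⟩
    refine ⟨m + 1, n, ?_⟩
    rw [Function.iterate_succ_apply', h]
    exact (Function.iterate_succ_apply' f n c).symm.trans (Function.iterate_succ_apply f n c)

lemma iter_mem_closed {f : Ω → Ω} {s : Set Ω} (hs : ∀ c, f c ∈ s ↔ c ∈ s) (k : ℕ) (c : Ω) :
    f^[k] c ∈ s ↔ c ∈ s := by
  induction k with
  | zero => rfl
  | succ k ih => rw [Function.iterate_succ_apply', hs, ih]

lemma cls_subset_closed {f : Ω → Ω} {s : Set Ω} (hs : ∀ c, f c ∈ s ↔ c ∈ s) {a : Ω}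
    (ha : a ∈ s) : cls f a ⊆ s := by
  rintro b ⟨m, n, h⟩
  have : f^[m] a ∈ s := (iter_mem_closed hs m a).2 ha
  rw [h] at this
  exact (iter_mem_closed hs n b).1 this

lemma isCycle_cls (f : Ω → Ω) (a : Ω) : IsCycleUnder f (cls f a) := by
  refine ⟨⟨a, mem_cls_self f a⟩, cls_closed f a, ?_⟩
  intro t hts ⟨b, hb⟩ ht
  have h1 : cls f b ⊆ t := cls_subset_closed ht hb
  have h2 : cls f a = cls f b := cls_eq_of_R (hts hb)
  exact le_antisymm hts (h2 ▸ h1)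

lemma cycle_iff {f : Ω → Ω} {s : Set Ω} : IsCycleUnder f s ↔ ∃ a, s = cls f a := by
  constructor
  · rintro ⟨⟨a, ha⟩, hcl, hmin⟩
    exact ⟨a, (hmin (cls f a) (cls_subset_closed hcl ha) ⟨a, mem_cls_self f a⟩
      (cls_closed f a)).symm⟩
  · rintro ⟨a, rfl⟩
    exact isCycle_cls f a

lemma cycle_eq_cls_of_mem {f : Ω → Ω} {s : Set Ω} (hs : IsCycleUnder f s) {a : Ω}
    (ha : a ∈ s) : s = cls f a := by
  obtain ⟨b, rfl⟩ := cycle_iff.1 hs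
  exact cls_eq_of_R ha

lemma iterate_mul_period {f : Ω → Ω} {a : Ω} {d : ℕ} (hd : f^[d] a = a) (q : ℕ) :
    f^[d * q] a = a := by
  induction q with
  | zero => rfl
  | succ q ih => rw [Nat.mul_succ, Function.iterate_add_apply, hd, ih]

lemma iterate_mod {f : Ω → Ω} {a : Ω} {d : ℕ} (hd : f^[d] a = a) (N : ℕ) :
    f^[N] a = f^[N % d] a := by
  have h1 : f^[d * (N / d)] a = a := iterate_mul_period hd _
  conv_lhs => rw [← Nat.div_add_mod N d, Nat.add_comm, Function.iterate_add_apply, h1]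

lemma cls_subset_orbit {f : Ω → Ω} (hf : Function.Injective f) {a : Ω} {d : ℕ}
    (hd : f^[d] a = a) (hd0 : 0 < d) : cls f a ⊆ {b | ∃ i < d, f^[i] a = b} := by
  rintro b ⟨m, n, h⟩
  have hnn : n ≤ n * d := Nat.le_mul_of_pos_right n hd0
  have key : f^[n] (f^[m + n * d - n] a) = f^[n] b := by
    rw [← Function.iterate_add_apply, show n + (m + n * d - n) = m + n * d by omega,
      Function.iterate_add_apply, show n * d = d * n from Nat.mul_comm n d,
      iterate_mul_period hd, h]
  have hb : f^[m + n * d - n] a = b := hf.iterate n key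
  exact ⟨(m + n * d - n) % d, Nat.mod_lt _ hd0, by rw [← iterate_mod hd, hb]⟩

lemma orbit_finite (f : Ω → Ω) (a : Ω) (d : ℕ) : {b | ∃ i < d, f^[i] a = b}.Finite := by
  have : {b | ∃ i < d, f^[i] a = b} ⊆ (fun i => f^[i] a) '' (Set.Iio d) := by
    rintro b ⟨i, hi, rfl⟩; exact ⟨i, hi, rfl⟩
  exact ((Set.finite_Iio d).image _).subset this

lemma cls_finite_iff_periodic {f : Ω → Ω} (hf : Function.Injective f) (a : Ω) :
    (cls f a).Finite ↔ ∃ d, 0 < d ∧ f^[d] a = a := by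
  constructor
  · intro hfin
    obtain ⟨i, -, j, -, hne, heq⟩ := Set.infinite_univ.exists_ne_map_eq_of_mapsTo
      (f := fun i : ℕ => f^[i] a) (fun i _ => show f^[i] a ∈ cls f a from ⟨i, 0, rfl⟩) hfin
    have key : ∀ i j : ℕ, i < j → f^[i] a = f^[j] a → ∃ d, 0 < d ∧ f^[d] a = a := by
      intro i j hlt heq
      refine ⟨j - i, by omega, hf.iterate i ?_⟩
      rw [← Function.iterate_add_apply, show i + (j - i) = j by omega, ← heq]
    rcases lt_or_gt_of_ne hne with hlt | hlt
    · exact key i j hlt heq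
    · exact key j i hlt heq.symm
  · rintro ⟨d, hd0, hd⟩
    exact (orbit_finite f a d).subset (cls_subset_orbit hf hd hd0)

end CycAux

namespace CycAux

/-! ### Transfer of cycles avoiding the swapped points -/

lemma cycle_transfer {F G : Ω → Ω} {x y : Ω}
    (hcase : ∀ c, (F c = x ∨ F c = y) → (G c = x ∨ G c = y))
    (heq : ∀ c, F c ≠ x → F c ≠ y → G c = F c)
    {s : Set Ω} (hxs : x ∉ s) (hys : y ∉ s) (hs : IsCycleUnder F s) :
    IsCycleUnder G s := by
  obtain ⟨hne, hcl, hmin⟩ := hs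
  have hGcl : ∀ c, G c ∈ s ↔ c ∈ s := by
    intro c
    by_cases hc : F c = x ∨ F c = y
    · have hG : G c ∉ s := by
        rcases hcase c hc with h' | h' <;> rw [h'] <;> assumption
      have hcns : c ∉ s := by
        intro hcs
        rcases hc with h' | h'
        · exact hxs (h' ▸ (hcl c).2 hcs)
        · exact hys (h' ▸ (hcl c).2 hcs)
      exact iff_of_false hG hcns
    · push_neg at hc
      rw [heq c hc.1 hc.2]; exact hcl c
  refine ⟨hne, hGcl, ?_⟩
  intro t hts htne htcl
  refine hmin t hts htne ?_
  intro c
  by_cases hc : F c = x ∨ F c = y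
  · have hG : F c ∉ t := by
      intro hmem
      rcases hc with h' | h'
      · exact hxs (h' ▸ hts hmem)
      · exact hys (h' ▸ hts hmem)
    have hcns : c ∉ t := by
      intro hmem
      have hFs : F c ∈ s := (hcl c).2 (hts hmem)
      rcases hc with h' | h'
      · exact hxs (h' ▸ hFs)
      · exact hys (h' ▸ hFs)
    exact iff_of_false hG hcns
  · push_neg at hc
    rw [← heq c hc.1 hc.2]
    exact htcl c

section Transposition

variable {f : Ω → Ω} {h : Equiv.Perm Ω} {x y : Ω}

lemma h_invol (hhx : h x = y) (hhy : h y = x) (hhz : ∀ z, z ≠ x → z ≠ y → h z = z) (z : Ω) :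
    h (h z) = z := by
  by_cases hzx : z = x
  · rw [hzx, hhx, hhy]
  · by_cases hzy : z = y
    · rw [hzy, hhy, hhx]
    · rw [hhz z hzx hzy, hhz z hzx hzy]

lemma f_eq_comp (hhx : h x = y) (hhy : h y = x) (hhz : ∀ z, z ≠ x → z ≠ y → h z = z) :
    f = ⇑h ∘ (⇑h ∘ f) := by
  funext c
  exact (h_invol hhx hhy hhz (f c)).symm

lemma comp_case (hhx : h x = y) (hhy : h y = x) :
    ∀ c, (f c = x ∨ f c = y) → ((⇑h ∘ f) c = x ∨ (⇑h ∘ f) c = y) := by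
  intro c hc
  rcases hc with h' | h'
  · right; simp [comp_apply, h', hhx]
  · left; simp [comp_apply, h', hhy]

lemma comp_eq (hhz : ∀ z, z ≠ x → z ≠ y → h z = z) :
    ∀ c, f c ≠ x → f c ≠ y → (⇑h ∘ f) c = f c := fun c h1 h2 => hhz _ h1 h2

lemma rev_case (hhx : h x = y) (hhy : h y = x) (hhz : ∀ z, z ≠ x → z ≠ y → h z = z) :
    ∀ c, ((⇑h ∘ f) c = x ∨ (⇑h ∘ f) c = y) → (f c = x ∨ f c = y) := by
  intro c hc
  have hfc : f c = h ((⇑h ∘ f) c) := (h_invol hhx hhy hhz (f c)).symm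
  rcases hc with h' | h'
  · right; rw [hfc, h', hhx]
  · left; rw [hfc, h', hhy]

lemma rev_eq (hhx : h x = y) (hhy : h y = x) (hhz : ∀ z, z ≠ x → z ≠ y → h z = z) :
    ∀ c, (⇑h ∘ f) c ≠ x → (⇑h ∘ f) c ≠ y → f c = (⇑h ∘ f) c := by
  intro c h1 h2
  have hfc : f c = h ((⇑h ∘ f) c) := (h_invol hhx hhy hhz (f c)).symm
  rw [hfc, hhz _ h1 h2]

lemma avoid_iff (hhx : h x = y) (hhy : h y = x) (hhz : ∀ z, z ≠ x → z ≠ y → h z = z)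
    {s : Set Ω} (hxs : x ∉ s) (hys : y ∉ s) :
    IsCycleUnder f s ↔ IsCycleUnder (⇑h ∘ f) s := by
  constructor
  · exact cycle_transfer (comp_case hhx hhy) (comp_eq hhz) hxs hys
  · exact cycle_transfer (rev_case hhx hhy hhz) (rev_eq hhx hhy hhz) hxs hys

/-! ### The union of the two affected classes is the same for `f` and `h ∘ f` -/

lemma W_subset {F G : Ω → Ω} (hFx : ∀ c, F c = x → G c = y) (hFy : ∀ c, F c = y → G c = x)
    (heq : ∀ c, F c ≠ x → F c ≠ y → G c = F c) :
    cls F x ∪ cls F y ⊆ cls G x ∪ cls G y := by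
  set U : Set Ω := cls G x ∪ cls G y with hU
  have hUG : ∀ c, G c ∈ U ↔ c ∈ U := by
    intro c
    constructor
    · rintro (hc | hc)
      · exact Or.inl ((cls_closed G x c).1 hc)
      · exact Or.inr ((cls_closed G y c).1 hc)
    · rintro (hc | hc)
      · exact Or.inl ((cls_closed G x c).2 hc)
      · exact Or.inr ((cls_closed G y c).2 hc)
  have hUF : ∀ c, F c ∈ U ↔ c ∈ U := by
    intro c
    by_cases hcx : F c = x
    · have hGc : G c = y := hFx c hcx
      have h1 : F c ∈ U := hcx ▸ Or.inl (mem_cls_self G x)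
      have h2 : c ∈ U := (hUG c).1 (hGc ▸ Or.inr (mem_cls_self G y))
      exact iff_of_true h1 h2
    · by_cases hcy : F c = y
      · have hGc : G c = x := hFy c hcy
        have h1 : F c ∈ U := hcy ▸ Or.inr (mem_cls_self G y)
        have h2 : c ∈ U := (hUG c).1 (hGc ▸ Or.inl (mem_cls_self G x))
        exact iff_of_true h1 h2
      · rw [← heq c hcx hcy]
        exact hUG c
  have hx : x ∈ U := Or.inl (mem_cls_self G x)
  have hy : y ∈ U := Or.inr (mem_cls_self G y)
  exact Set.union_subset (cls_subset_closed hUF hx) (cls_subset_closed hUF hy)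

lemma W_eq (hhx : h x = y) (hhy : h y = x) (hhz : ∀ z, z ≠ x → z ≠ y → h z = z) :
    cls f x ∪ cls f y = cls (⇑h ∘ f) x ∪ cls (⇑h ∘ f) y := by
  apply le_antisymm
  · refine W_subset ?_ ?_ (comp_eq hhz)
    · intro c hc; simp [comp_apply, hc, hhx]
    · intro c hc; simp [comp_apply, hc, hhy]
  · refine W_subset ?_ ?_ (rev_eq hhx hhy hhz)
    · intro c hc
      have h2 : f c = h ((⇑h ∘ f) c) := (h_invol hhx hhy hhz (f c)).symm
      rw [h2, hc, hhx]
    · intro c hc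
      have h2 : f c = h ((⇑h ∘ f) c) := (h_invol hhx hhy hhz (f c)).symm
      rw [h2, hc, hhy]

/-! ### Iterates of `h ∘ f` agree with iterates of `f` away from `x, y` -/

lemma iter_eq (hhz : ∀ z, z ≠ x → z ≠ y → h z = z) {a : Ω} (k : ℕ)
    (hk : ∀ i, 0 < i → i ≤ k → f^[i] a ≠ x ∧ f^[i] a ≠ y) :
    (⇑h ∘ f)^[k] a = f^[k] a := by
  induction k with
  | zero => rfl
  | succ k ih =>
    have ih' := ih (fun i hi hik => hk i hi (hik.trans (Nat.le_succ k)))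
    rw [Function.iterate_succ_apply', ih', comp_apply,
      ← Function.iterate_succ_apply' f k a,
      hhz _ (hk (k+1) (Nat.succ_pos k) le_rfl).1 (hk (k+1) (Nat.succ_pos k) le_rfl).2]

/-! ### Minimality packages -/

lemma exists_minimal_iter (f : Ω → Ω) {a c : Ω} (hex : ∃ d, 0 < d ∧ f^[d] a = c) :
    ∃ d, 0 < d ∧ f^[d] a = c ∧ ∀ i, 0 < i → i < d → f^[i] a ≠ c := by
  classical
  exact ⟨Nat.find hex, (Nat.find_spec hex).1, (Nat.find_spec hex).2,
    fun i hi hlt hc => Nat.find_min hex hlt ⟨hi, hc⟩⟩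

lemma min_package {x y : Ω} (hxy : x ≠ y) (hex : ∃ d, 0 < d ∧ f^[d] x = y) :
    ∃ d, 0 < d ∧ f^[d] x = y ∧ ∀ i, 0 < i → i < d → f^[i] x ≠ x ∧ f^[i] x ≠ y := by
  obtain ⟨d, hd0, hd, hmin⟩ := exists_minimal_iter f hex
  refine ⟨d, hd0, hd, fun i hi hlt => ⟨?_, hmin i hi hlt⟩⟩
  intro hix
  have h1 : f^[d] x = f^[d % i] x := iterate_mod hix d
  rcases Nat.eq_zero_or_pos (d % i) with h0 | hpos
  · rw [h0] at h1
    exact hxy ((hd.symm.trans h1).symm)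
  · exact hmin _ hpos (lt_of_lt_of_le (Nat.mod_lt _ hi) hlt.le) (h1.symm.trans hd)

lemma R_iter (hf : Function.Injective f) {x y : Ω} (hxy : x ≠ y) (hR : R f x y) :
    (∃ d, 0 < d ∧ f^[d] x = y) ∨ (∃ d, 0 < d ∧ f^[d] y = x) := by
  obtain ⟨m, n, hmn⟩ := hR
  have hne : m ≠ n := by
    intro hmeq
    exact hxy (hf.iterate n (by rw [← hmeq, hmn, hmeq]))
  rcases le_or_gt n m with hle | hlt
  · left
    refine ⟨m - n, by omega, hf.iterate n ?_⟩
    rw [← Function.iterate_add_apply, show n + (m - n) = m by omega, hmn]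
  · right
    refine ⟨n - m, by omega, hf.iterate m ?_⟩
    rw [← Function.iterate_add_apply, show m + (n - m) = n by omega, ← hmn]

/-! ### The splitting lemma -/

lemma split_cls (hf : Function.Injective f) {a b : Ω} (hab : a ≠ b) (hha : h a = b)
    (hhb : h b = a) (hz : ∀ z, z ≠ a → z ≠ b → h z = z) {d : ℕ} (hd0 : 0 < d)
    (hd : f^[d] a = b) (hmin : ∀ i, 0 < i → i < d → f^[i] a ≠ a ∧ f^[i] a ≠ b) :
    (cls (⇑h ∘ f) a).Finite ∧ b ∉ cls (⇑h ∘ f) a := by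
  have hg : Function.Injective (⇑h ∘ f) := h.injective.comp hf
  have horb : ∀ i, i < d → (⇑h ∘ f)^[i] a = f^[i] a := by
    intro i hi
    exact iter_eq hz i (fun j hj hji => hmin j hj (lt_of_le_of_lt hji hi))
  have hper : (⇑h ∘ f)^[d] a = a := by
    have hd1 : d - 1 < d := by omega
    rw [show d = (d - 1) + 1 by omega, Function.iterate_succ_apply', horb _ hd1, comp_apply,
      ← Function.iterate_succ_apply' f (d - 1) a, show (d - 1).succ = d by omega, hd, hhb]
  have hsub : cls (⇑h ∘ f) a ⊆ {c | ∃ i < d, f^[i] a = c} := by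
    intro c hc
    obtain ⟨i, hi, hic⟩ := cls_subset_orbit hg hper hd0 hc
    exact ⟨i, hi, by rw [← horb i hi, hic]⟩
  constructor
  · exact (orbit_finite f a d).subset hsub
  · intro hb
    obtain ⟨i, hi, hib⟩ := hsub hb
    rcases Nat.eq_zero_or_pos i with h0 | hpos
    · rw [h0] at hib; exact hab hib
    · exact (hmin i hpos hi).2 hib

/-! ### The merging lemma -/

lemma merge_rel (hf : Function.Injective f) {a b : Ω} (hha : h a = b)
    (hz : ∀ z, z ≠ a → z ≠ b → h z = z) (hfin : (cls f a).Finite) (hnb : ¬ R f a b) :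
    R (⇑h ∘ f) a b := by
  obtain ⟨d, hd0, hd, hmin⟩ :=
    exists_minimal_iter f ((cls_finite_iff_periodic hf a).1 hfin)
  have hnoty : ∀ i, f^[i] a ≠ b := by
    intro i hib
    exact hnb ⟨i, 0, hib⟩
  have horb : (⇑h ∘ f)^[d - 1] a = f^[d - 1] a := by
    refine iter_eq hz (d - 1) (fun j hj hji => ⟨hmin j hj (by omega), hnoty j⟩)
  have hstep : (⇑h ∘ f)^[d] a = b := by
    rw [show d = (d - 1) + 1 by omega, Function.iterate_succ_apply', horb, comp_apply,
      ← Function.iterate_succ_apply' f (d - 1) a, show (d - 1).succ = d by omega, hd, hha]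
  exact ⟨d, 0, hstep⟩

end Transposition

end CycAux

namespace CycAux

/-! ### Cardinality helpers -/

lemma finite_of_mk_eq_nat {s : Set Ω} {n : ℕ} (h : Cardinal.mk ↥s = (n : Cardinal)) :
    s.Finite := by
  have h1 : Cardinal.mk ↥s < ℵ₀ := h ▸ Cardinal.nat_lt_aleph0 n
  rw [Cardinal.lt_aleph0_iff_finite] at h1
  exact Set.finite_coe_iff.1 h1

lemma ncard_of_mk_eq_nat {s : Set Ω} {n : ℕ} (h : Cardinal.mk ↥s = (n : Cardinal)) :
    s.ncard = n := by
  have h2 : Nat.card ↥s = n := by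
    show Cardinal.toNat (Cardinal.mk ↥s) = n
    rw [h, Cardinal.toNat_natCast]
  rw [← Nat.card_coe_set_eq, h2]

lemma mk_eq_of_finite {s : Set Ω} (hs : s.Finite) :
    Cardinal.mk ↥s = (s.ncard : Cardinal) := by
  have h1 : Cardinal.mk ↥s < ℵ₀ := by
    rw [Cardinal.lt_aleph0_iff_finite]; exact Set.finite_coe_iff.2 hs
  rw [← Cardinal.cast_toNat_of_lt_aleph0 h1]
  congr 1

/-! ### The sets of "touched" cycles and their generating sums -/

def T1 (a : Set Ω) (n : ℕ) : Set (Set Ω) :=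
  {s | s = a ∧ Cardinal.mk ↥s = (n : Cardinal)}

def Tpair (a b : Set Ω) (n : ℕ) : Set (Set Ω) :=
  {s | (s = a ∨ s = b) ∧ Cardinal.mk ↥s = (n : Cardinal)}

noncomputable def sumT1 (a : Set Ω) : ℤ :=
  ∑ᶠ n : ℕ, if 0 < n then ((T1 a n).ncard : ℤ) else 0

noncomputable def sumTpair (a b : Set Ω) : ℤ :=
  ∑ᶠ n : ℕ, if 0 < n then ((Tpair a b n).ncard : ℤ) else 0

lemma T1_subset_singleton (a : Set Ω) (n : ℕ) : T1 a n ⊆ {a} := fun _ hs => hs.1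

lemma T1_eq_empty_of_infinite {a : Set Ω} (ha : a.Infinite) (n : ℕ) : T1 a n = ∅ := by
  ext s
  simp only [T1, Set.mem_setOf_eq, Set.mem_empty_iff_false, iff_false, not_and]
  rintro rfl hm
  exact ha (finite_of_mk_eq_nat hm)

lemma T1_eq_empty_of_ne {a : Set Ω} {n : ℕ} (hn : n ≠ a.ncard) : T1 a n = ∅ := by
  ext s
  simp only [T1, Set.mem_setOf_eq, Set.mem_empty_iff_false, iff_false, not_and]
  rintro rfl hm
  exact hn (ncard_of_mk_eq_nat hm).symm

lemma T1_eq_singleton {a : Set Ω} (ha : a.Finite) : T1 a a.ncard = {a} := by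
  apply le_antisymm (T1_subset_singleton a _)
  rintro s rfl
  exact ⟨rfl, mk_eq_of_finite ha⟩

lemma sumT1_of_finite {a : Set Ω} (ha : a.Finite) (hne : a.Nonempty) : sumT1 a = 1 := by
  unfold sumT1
  rw [finsum_eq_single _ a.ncard]
  · rw [if_pos ((Set.ncard_pos ha).2 hne), T1_eq_singleton ha, Set.ncard_singleton]
    norm_num
  · intro n hn
    rw [T1_eq_empty_of_ne hn, Set.ncard_empty]
    simp

lemma sumT1_of_infinite {a : Set Ω} (ha : a.Infinite) : sumT1 a = 0 := by
  unfold sumT1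
  apply finsum_eq_zero_of_forall_eq_zero
  intro n
  rw [T1_eq_empty_of_infinite ha, Set.ncard_empty]
  simp

lemma support_T1 (a : Set Ω) :
    (Function.support fun n : ℕ => if 0 < n then ((T1 a n).ncard : ℤ) else 0) ⊆
      {a.ncard} := by
  intro n hn
  simp only [Function.mem_support] at hn
  by_contra hne
  simp only [Set.mem_singleton_iff] at hne
  rw [T1_eq_empty_of_ne hne, Set.ncard_empty] at hn
  simp at hn

lemma support_Tpair (a b : Set Ω) :
    (Function.support fun n : ℕ => if 0 < n then ((Tpair a b n).ncard : ℤ) else 0) ⊆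
      {a.ncard, b.ncard} := by
  intro n hn
  simp only [Function.mem_support] at hn
  have h1 : (Tpair a b n).ncard ≠ 0 := by
    intro h0
    rw [h0] at hn
    simp at hn
  obtain ⟨s, hs, hm⟩ := Set.nonempty_of_ncard_ne_zero h1
  rcases hs with rfl | rfl
  · exact Or.inl (ncard_of_mk_eq_nat hm).symm
  · exact Or.inr (ncard_of_mk_eq_nat hm).symm

lemma Tpair_eq_union (a b : Set Ω) (n : ℕ) : Tpair a b n = T1 a n ∪ T1 b n := by
  ext s
  constructor
  · rintro ⟨h1 | h1, hm⟩
    · exact Or.inl ⟨h1, hm⟩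
    · exact Or.inr ⟨h1, hm⟩
  · rintro (⟨h1, hm⟩ | ⟨h1, hm⟩)
    · exact ⟨Or.inl h1, hm⟩
    · exact ⟨Or.inr h1, hm⟩

lemma Tpair_self (a : Set Ω) (n : ℕ) : Tpair a a n = T1 a n := by
  rw [Tpair_eq_union, Set.union_self]

lemma Tpair_comm (a b : Set Ω) (n : ℕ) : Tpair a b n = Tpair b a n := by
  rw [Tpair_eq_union, Tpair_eq_union, Set.union_comm]

lemma Tpair_finite (a b : Set Ω) (n : ℕ) : (Tpair a b n).Finite := by
  rw [Tpair_eq_union]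
  exact (((Set.finite_singleton a).subset (T1_subset_singleton a n)).union
    ((Set.finite_singleton b).subset (T1_subset_singleton b n)))

lemma ncard_Tpair {a b : Set Ω} (hab : a ≠ b) (n : ℕ) :
    (Tpair a b n).ncard = (T1 a n).ncard + (T1 b n).ncard := by
  rw [Tpair_eq_union]
  refine Set.ncard_union_eq ?_ ((Set.finite_singleton a).subset (T1_subset_singleton a n))
    ((Set.finite_singleton b).subset (T1_subset_singleton b n))
  exact Set.disjoint_of_subset (T1_subset_singleton a n) (T1_subset_singleton b n)
    (Set.disjoint_singleton.2 hab)

lemma sumTpair_self (a : Set Ω) : sumTpair a a = sumT1 a := by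
  unfold sumTpair sumT1
  exact finsum_congr fun n => by rw [Tpair_self]

lemma sumTpair_comm (a b : Set Ω) : sumTpair a b = sumTpair b a := by
  unfold sumTpair
  exact finsum_congr fun n => by rw [Tpair_comm]

lemma sumTpair_ne {a b : Set Ω} (hab : a ≠ b) : sumTpair a b = sumT1 a + sumT1 b := by
  unfold sumTpair sumT1
  have hterm : ∀ n : ℕ, (if 0 < n then ((Tpair a b n).ncard : ℤ) else 0) =
      (if 0 < n then ((T1 a n).ncard : ℤ) else 0) +
      (if 0 < n then ((T1 b n).ncard : ℤ) else 0) := by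
    intro n
    rw [ncard_Tpair hab]
    split_ifs
    · push_cast; ring
    · ring
  rw [finsum_congr hterm]
  exact finsum_add_distrib
    (((Set.finite_singleton a.ncard).subset (support_T1 a)))
    (((Set.finite_singleton b.ncard).subset (support_T1 b)))

end CycAux


namespace CycAux

/-! ### Decomposition of the cycle counts -/

def shSet (F : Ω → Ω) (x y : Ω) (n : ℕ) : Set (Set Ω) :=
  {s | IsCycleUnder F s ∧ Cardinal.mk ↥s = (n : Cardinal) ∧ x ∉ s ∧ y ∉ s}

lemma cycles_finite (F : Ω → Ω) (n : ℕ) (hn : Cn F n < ℵ₀) :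
    ({s : Set Ω | IsCycleUnder F s ∧ Cardinal.mk ↥s = (n : Cardinal)}).Finite := by
  rw [Cn, Cardinal.lt_aleph0_iff_finite] at hn
  exact Set.finite_coe_iff.1 hn

lemma cn_toNat (F : Ω → Ω) (x y : Ω) (n : ℕ) (hsh : (shSet F x y n).Finite) :
    (Cn F n).toNat = (shSet F x y n).ncard + (Tpair (cls F x) (cls F y) n).ncard := by
  have h0 : (Cn F n).toNat =
      {s : Set Ω | IsCycleUnder F s ∧ Cardinal.mk ↥s = (n : Cardinal)}.ncard :=
    Nat.card_coe_set_eq _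
  have hset : {s : Set Ω | IsCycleUnder F s ∧ Cardinal.mk ↥s = (n : Cardinal)} =
      shSet F x y n ∪ Tpair (cls F x) (cls F y) n := by
    ext s
    constructor
    · rintro ⟨hc, hm⟩
      by_cases hx : x ∈ s
      · exact Or.inr ⟨Or.inl (cycle_eq_cls_of_mem hc hx), hm⟩
      · by_cases hy : y ∈ s
        · exact Or.inr ⟨Or.inr (cycle_eq_cls_of_mem hc hy), hm⟩
        · exact Or.inl ⟨hc, hm, hx, hy⟩
    · rintro (⟨hc, hm, -, -⟩ | ⟨hab, hm⟩)
      · exact ⟨hc, hm⟩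
      · rcases hab with rfl | rfl
        · exact ⟨isCycle_cls F x, hm⟩
        · exact ⟨isCycle_cls F y, hm⟩
  have hdisj : Disjoint (shSet F x y n) (Tpair (cls F x) (cls F y) n) := by
    rw [Set.disjoint_left]
    rintro s ⟨-, -, hx, hy⟩ ⟨hab, -⟩
    rcases hab with rfl | rfl
    · exact hx (mem_cls_self F x)
    · exact hy (mem_cls_self F y)
  rw [h0, hset, Set.ncard_union_eq hdisj hsh (Tpair_finite _ _ n)]

section Transposition2

variable {f : Ω → Ω} {h : Equiv.Perm Ω} {x y : Ω}

lemma shSet_comp_eq (hhx : h x = y) (hhy : h y = x) (hhz : ∀ z, z ≠ x → z ≠ y → h z = z)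
    (n : ℕ) : shSet (⇑h ∘ f) x y n = shSet f x y n := by
  ext s
  simp only [shSet, Set.mem_setOf_eq]
  constructor
  · rintro ⟨hc, hm, hx', hy'⟩
    exact ⟨(avoid_iff hhx hhy hhz hx' hy').2 hc, hm, hx', hy'⟩
  · rintro ⟨hc, hm, hx', hy'⟩
    exact ⟨(avoid_iff hhx hhy hhz hx' hy').1 hc, hm, hx', hy'⟩

lemma diffSum_comp (hf : Function.Injective f) (hhx : h x = y) (hhy : h y = x)
    (hhz : ∀ z, z ≠ x → z ≠ y → h z = z) (h2 : ∀ n : ℕ, 0 < n → Cn f n < ℵ₀) :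
    diffSum f (⇑h ∘ f) =
      sumTpair (cls f x) (cls f y) - sumTpair (cls (⇑h ∘ f) x) (cls (⇑h ∘ f) y) := by
  have hshf : ∀ n : ℕ, 0 < n → (shSet f x y n).Finite := by
    intro n hn
    exact (cycles_finite f n (h2 n hn)).subset (fun s hs => ⟨hs.1, hs.2.1⟩)
  have hterm : ∀ n : ℕ,
      (if 0 < n then (((Cn f n).toNat : ℤ) - ((Cn (⇑h ∘ f) n).toNat : ℤ)) else 0) =
      (if 0 < n then ((Tpair (cls f x) (cls f y) n).ncard : ℤ) else 0) -
      (if 0 < n then ((Tpair (cls (⇑h ∘ f) x) (cls (⇑h ∘ f) y) n).ncard : ℤ) else 0) := by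
    intro n
    by_cases hn : 0 < n
    · rw [if_pos hn, if_pos hn, if_pos hn,
        cn_toNat f x y n (hshf n hn),
        cn_toNat (⇑h ∘ f) x y n (by rw [shSet_comp_eq hhx hhy hhz]; exact hshf n hn),
        shSet_comp_eq hhx hhy hhz]
      push_cast
      ring
    · rw [if_neg hn, if_neg hn, if_neg hn]; ring
  have hs1 : (Function.support fun n : ℕ =>
      if 0 < n then ((Tpair (cls f x) (cls f y) n).ncard : ℤ) else 0).Finite :=
    ((Set.finite_singleton (cls f y).ncard).insert (cls f x).ncard).subset
      (support_Tpair _ _)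
  have hs2 : (Function.support fun n : ℕ =>
      if 0 < n then ((Tpair (cls (⇑h ∘ f) x) (cls (⇑h ∘ f) y) n).ncard : ℤ) else 0).Finite :=
    ((Set.finite_singleton (cls (⇑h ∘ f) y).ncard).insert (cls (⇑h ∘ f) x).ncard).subset
      (support_Tpair _ _)
  rw [diffSum, finsum_congr hterm, finsum_sub_distrib hs1 hs2]
  rfl

end Transposition2

end CycAux

namespace CycAux

/-! ### At most one infinite cycle -/

lemma not_two_infinite_cycles {f : Ω → Ω} (h1 : Copen f + Cfwd f = 1) {s t : Set Ω}
    (hs : IsCycleUnder f s) (ht : IsCycleUnder f t) (hsi : s.Infinite) (hti : t.Infinite)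
    (hst : s ≠ t) : False := by
  have key : ∀ u : Set Ω, IsCycleUnder f u → u.Infinite →
      IsOpenCycle f u ∨ IsForwardCycle f u := by
    intro u hu hui
    by_cases hr : (u \ Set.range f).Nonempty
    · exact Or.inr ⟨hu, hui, hr⟩
    · exact Or.inl ⟨hu, hui, hr⟩
  have hle : (2 : Cardinal) ≤ Copen f + Cfwd f := by
    have h11 : (2 : Cardinal) = 1 + 1 := by norm_num
    rcases key s hs hsi with hso | hsf <;> rcases key t ht hti with hto | htf
    · refine le_trans ?_ le_self_add
      exact Cardinal.two_le_iff.2 ⟨⟨s, hso⟩, ⟨t, hto⟩, fun hc => hst (congrArg Subtype.val hc)⟩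
    · rw [h11]
      exact add_le_add (Cardinal.one_le_iff_ne_zero.2 (@Cardinal.mk_ne_zero _ ⟨⟨s, hso⟩⟩))
        (Cardinal.one_le_iff_ne_zero.2 (@Cardinal.mk_ne_zero _ ⟨⟨t, htf⟩⟩))
    · rw [h11]
      exact add_le_add (Cardinal.one_le_iff_ne_zero.2 (@Cardinal.mk_ne_zero _ ⟨⟨t, hto⟩⟩))
        (Cardinal.one_le_iff_ne_zero.2 (@Cardinal.mk_ne_zero _ ⟨⟨s, hsf⟩⟩))
    · refine le_trans ?_ le_add_self
      exact Cardinal.two_le_iff.2 ⟨⟨s, hsf⟩, ⟨t, htf⟩, fun hc => hst (congrArg Subtype.val hc)⟩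
  rw [h1] at hle
  have : (2 : ℕ) ≤ (1 : ℕ) := by exact_mod_cast hle
  omega

section MainEval

variable {f : Ω → Ω} {h : Equiv.Perm Ω}

lemma eval_same (hf : Function.Injective f) {a b : Ω} (hab : a ≠ b) (hha : h a = b)
    (hhb : h b = a) (hz : ∀ z, z ≠ a → z ≠ b → h z = z)
    (hex : ∃ d, 0 < d ∧ f^[d] a = b) (hRab : R f a b) :
    sumTpair (cls f a) (cls f b) - sumTpair (cls (⇑h ∘ f) a) (cls (⇑h ∘ f) b) = -1 := by
  obtain ⟨d, hd0, hd, hmin⟩ := min_package hab hex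
  obtain ⟨hΓfin, hbnot⟩ := split_cls hf hab hha hhb hz hd0 hd hmin
  have hσ : cls f a = cls f b := cls_eq_of_R hRab
  have hW : cls f a ∪ cls f b = cls (⇑h ∘ f) a ∪ cls (⇑h ∘ f) b := W_eq hha hhb hz
  have hWa : cls (⇑h ∘ f) a ∪ cls (⇑h ∘ f) b = cls f b := by
    rw [← hW, hσ, Set.union_self]
  have hΓne : cls (⇑h ∘ f) a ≠ cls (⇑h ∘ f) b := by
    intro he
    exact hbnot (he ▸ mem_cls_self (⇑h ∘ f) b)
  by_cases hfin : (cls f b).Finite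
  · have hΓbfin : (cls (⇑h ∘ f) b).Finite :=
      (hfin.subset (hWa ▸ Set.subset_union_right))
    have e1 : sumTpair (cls f a) (cls f b) = 1 := by
      rw [hσ, sumTpair_self]
      exact sumT1_of_finite hfin ⟨b, mem_cls_self f b⟩
    have e2 : sumTpair (cls (⇑h ∘ f) a) (cls (⇑h ∘ f) b) = 2 := by
      rw [sumTpair_ne hΓne, sumT1_of_finite hΓfin ⟨a, mem_cls_self _ a⟩,
        sumT1_of_finite hΓbfin ⟨b, mem_cls_self _ b⟩]
      norm_num
    rw [e1, e2]; norm_num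
  · have hinf : (cls f b).Infinite := hfin
    have hΓbinf : (cls (⇑h ∘ f) b).Infinite := by
      intro hΓb
      exact hinf (hWa ▸ (hΓfin.union hΓb))
    have e1 : sumTpair (cls f a) (cls f b) = 0 := by
      rw [hσ, sumTpair_self]
      exact sumT1_of_infinite hinf
    have e2 : sumTpair (cls (⇑h ∘ f) a) (cls (⇑h ∘ f) b) = 1 := by
      rw [sumTpair_ne hΓne, sumT1_of_finite hΓfin ⟨a, mem_cls_self _ a⟩,
        sumT1_of_infinite hΓbinf]
      norm_num
    rw [e1, e2]; norm_num

lemma eval_diff (hf : Function.Injective f) {x y : Ω} (hxy : x ≠ y) (hhx : h x = y)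
    (hhy : h y = x) (hhz : ∀ z, z ≠ x → z ≠ y → h z = z)
    (h1 : Copen f + Cfwd f = 1) (hR : ¬ R f x y) :
    sumTpair (cls f x) (cls f y) - sumTpair (cls (⇑h ∘ f) x) (cls (⇑h ∘ f) y) = 1 := by
  have hσne : cls f x ≠ cls f y := by
    intro he
    exact hR (R_symm (he ▸ mem_cls_self f x : x ∈ cls f y))
  have hmerge : R (⇑h ∘ f) x y := by
    by_cases hfinx : (cls f x).Finite
    · exact merge_rel hf hhx hhz hfinx hR
    · by_cases hfiny : (cls f y).Finite
      · exact R_symm (merge_rel hf hhy (fun z h1 h2 => hhz z h2 h1) hfiny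
          (fun hr => hR (R_symm hr)))
      · exact absurd h1 (fun h1' => not_two_infinite_cycles h1' (isCycle_cls f x)
          (isCycle_cls f y) hfinx hfiny hσne)
  have hΓeq : cls (⇑h ∘ f) x = cls (⇑h ∘ f) y := cls_eq_of_R hmerge
  have hW : cls f x ∪ cls f y = cls (⇑h ∘ f) x ∪ cls (⇑h ∘ f) y := W_eq hhx hhy hhz
  have hWa : cls (⇑h ∘ f) x = cls f x ∪ cls f y := by
    rw [hW, ← hΓeq, Set.union_self]
  have e2base : sumTpair (cls (⇑h ∘ f) x) (cls (⇑h ∘ f) y) = sumT1 (cls (⇑h ∘ f) x) := by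
    rw [hΓeq, sumTpair_self]
  by_cases hfinx : (cls f x).Finite
  · by_cases hfiny : (cls f y).Finite
    · have e1 : sumTpair (cls f x) (cls f y) = 2 := by
        rw [sumTpair_ne hσne, sumT1_of_finite hfinx ⟨x, mem_cls_self f x⟩,
          sumT1_of_finite hfiny ⟨y, mem_cls_self f y⟩]
        norm_num
      have e2 : sumTpair (cls (⇑h ∘ f) x) (cls (⇑h ∘ f) y) = 1 := by
        rw [e2base]
        exact sumT1_of_finite (hWa ▸ (hfinx.union hfiny)) ⟨x, hWa ▸ Or.inl (mem_cls_self f x)⟩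
      rw [e1, e2]; norm_num
    · have e1 : sumTpair (cls f x) (cls f y) = 1 := by
        rw [sumTpair_ne hσne, sumT1_of_finite hfinx ⟨x, mem_cls_self f x⟩,
          sumT1_of_infinite hfiny]
        norm_num
      have e2 : sumTpair (cls (⇑h ∘ f) x) (cls (⇑h ∘ f) y) = 0 := by
        rw [e2base]
        refine sumT1_of_infinite ?_
        rw [hWa]
        exact Set.Infinite.mono Set.subset_union_right hfiny
      rw [e1, e2]; norm_num
  · have e1 : sumTpair (cls f x) (cls f y) = 1 := by
      by_cases hfiny : (cls f y).Finite
      · rw [sumTpair_ne hσne, sumT1_of_infinite hfinx,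
          sumT1_of_finite hfiny ⟨y, mem_cls_self f y⟩]
        norm_num
      · exact absurd h1 (fun h1' => not_two_infinite_cycles h1' (isCycle_cls f x)
          (isCycle_cls f y) hfinx hfiny hσne)
    have e2 : sumTpair (cls (⇑h ∘ f) x) (cls (⇑h ∘ f) y) = 0 := by
      rw [e2base]
      refine sumT1_of_infinite ?_
      rw [hWa]
      exact Set.Infinite.mono Set.subset_union_left hfinx
    rw [e1, e2]; norm_num

lemma sum_eval (hf : Function.Injective f) {x y : Ω} (hxy : x ≠ y) (hhx : h x = y)
    (hhy : h y = x) (hhz : ∀ z, z ≠ x → z ≠ y → h z = z) (h1 : Copen f + Cfwd f = 1) :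
    sumTpair (cls f x) (cls f y) - sumTpair (cls (⇑h ∘ f) x) (cls (⇑h ∘ f) y) = -1 ∨
    sumTpair (cls f x) (cls f y) - sumTpair (cls (⇑h ∘ f) x) (cls (⇑h ∘ f) y) = 1 := by
  by_cases hR : R f x y
  · left
    rcases R_iter hf hxy hR with hex | hex
    · exact eval_same hf hxy hhx hhy hhz hex hR
    · have := eval_same hf hxy.symm hhy hhx (fun z h1' h2' => hhz z h2' h1') hex (R_symm hR)
      rw [sumTpair_comm (cls f x), sumTpair_comm (cls (⇑h ∘ f) x)]
      exact this
  · exact Or.inr (eval_diff hf hxy hhx hhy hhz h1 hR)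

end MainEval

end CycAux


namespace CycAux

/-! ### Conjugation invariance of cycle counts -/

lemma cycle_image (a : Equiv.Perm Ω) {F : Ω → Ω} {s : Set Ω} (hs : IsCycleUnder F s) :
    IsCycleUnder (⇑a ∘ F ∘ ⇑a.symm) (⇑a '' s) := by
  obtain ⟨hne, hcl, hmin⟩ := hs
  refine ⟨hne.image _, ?_, ?_⟩
  · intro c
    rw [Set.mem_image_equiv, Set.mem_image_equiv]
    simp only [comp_apply, Equiv.symm_apply_apply]
    exact hcl (a.symm c)
  · intro t hts htne htcl
    have hts' : ⇑a.symm '' t ⊆ s := by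
      rintro c ⟨u, hu, rfl⟩
      obtain ⟨v, hv, hvu⟩ := hts hu
      rw [← hvu]
      simpa using hv
    have htcl' : ∀ c, F c ∈ ⇑a.symm '' t ↔ c ∈ ⇑a.symm '' t := by
      intro c
      rw [Set.mem_image_equiv, Set.mem_image_equiv]
      simp only [Equiv.symm_symm]
      have := htcl (a c)
      simp only [comp_apply, Equiv.symm_apply_apply] at this
      exact this
    have := hmin (⇑a.symm '' t) hts' (htne.image _) htcl'
    rw [← this, Equiv.image_symm_image]

lemma Cn_conj (F : Ω → Ω) (a : Equiv.Perm Ω) (n : ℕ) :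
    Cn F n = Cn (⇑a ∘ F ∘ ⇑a.symm) n := by
  have hFG : (⇑a.symm ∘ (⇑a ∘ F ∘ ⇑a.symm) ∘ ⇑a.symm.symm) = F := by
    funext c; simp
  apply Cardinal.mk_congr
  refine
    { toFun := fun s => ⟨⇑a '' s.1, cycle_image a s.2.1, ?_⟩
      invFun := fun s => ⟨⇑a.symm '' s.1, by
        have h3 := cycle_image a.symm s.2.1
        rwa [hFG] at h3, ?_⟩
      left_inv := fun s => Subtype.ext (a.symm_image_image s.1)
      right_inv := fun s => Subtype.ext (a.image_symm_image s.1) }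
  · rw [Cardinal.mk_image_eq a.injective]
    exact s.2.2
  · rw [Cardinal.mk_image_eq a.symm.injective]
    exact s.2.2

lemma Cn_swap (f : Ω → Ω) (h : Equiv.Perm Ω) (n : ℕ) : Cn (⇑h ∘ f) n = Cn (f ∘ ⇑h) n := by
  have he : (⇑h.symm ∘ (⇑h ∘ f) ∘ ⇑h.symm.symm) = f ∘ ⇑h := by
    funext c; simp
  rw [Cn_conj (⇑h ∘ f) h.symm n, he]

end CycAux


theorem stmt_17 [Countable Ω] [Infinite Ω] (f : Ω → Ω) (hf : Function.Injective f)
    (h1 : Copen f + Cfwd f = 1) (h2 : ∀ n : ℕ, 0 < n → Cn f n < ℵ₀)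
    (h : Equiv.Perm Ω) (ht : IsTransposition h) :
    diffSum f (⇑h ∘ f) = diffSum f (f ∘ ⇑h) ∧
      (diffSum f (⇑h ∘ f) = -1 ∨ diffSum f (⇑h ∘ f) = 1) := by
  obtain ⟨x, y, hxy, hhx, hhy, hhz⟩ := ht
  constructor
  · unfold diffSum
    exact finsum_congr fun n => by rw [CycAux.Cn_swap f h n]
  · rw [CycAux.diffSum_comp hf hhx hhy hhz h2]
    exact CycAux.sum_eval hf hxy hhx hhy hhz h1
end
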